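/- arXiv:2306.15382 — 8 statements merged into one kernel-verified Lean document; each statement's English description precedes it below -/
import Mathlib

section
/- Let d ≥ 1, let K ⊆ ℝ^d be compact and L ⊆ ℝ^d be closed with K ∩ L = ∅. Then there exist ρ > 0 and a sequence (χ_N)_{N≥1} of smooth, compactly supported functions χ_N : ℝ^d → [0,1] such that for every N ≥ 1: χ_N = 1 on K, χ_N = 0 on L, and for every integer j with 0 ≤ j ≤ N and every x ∈ ℝ^d, the operator norm of the j-th iterated total derivative satisfies ‖D^j χ_N(x)‖ ≤ (ρ N)^j. -/
/-!
Take `χ_N = ψ_N ⋆ ⋯ ⋆ ψ_N ⋆ 𝟙_{K_δ}` with `N` factors `ψ_N`, where `K_δ` is a closed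
`δ`-thickening of `K` not meeting the `δ`-thickening of `L`, and `ψ_N ≥ 0` has integral `1` and
support in the ball of radius `δ / N`. The supports add up to radius `δ`, so `χ_N` is `1` on `K`
and `0` on `L`. For `j ≤ N` each of the `j` derivatives can be put on its own factor `ψ_N`, whose
derivative has `L¹`-norm `O(N / δ)` by rescaling a fixed bump, while all other factors have
`L¹`-norm `1`.
-/

open Metric Set MeasureTheory Function ContinuousLinearMap Module
open scoped Convolution ContDiff

section ConvolutionBound

variable {G E E' F : Type*} [NormedAddCommGroup G] [MeasurableSpace G] {μ : Measure G}
  [NormedAddCommGroup E] [NormedSpace ℝ E] [NormedAddCommGroup E'] [NormedSpace ℝ E']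
  [NormedAddCommGroup F] [NormedSpace ℝ F]

theorem norm_convolution_le_of_norm_le (L : E →L[ℝ] E' →L[ℝ] F) {f : G → E} {g : G → E'}
    (hf : Integrable f μ) {C : ℝ} (hg : ∀ y, ‖g y‖ ≤ C) (x : G) :
    ‖(f ⋆[L, μ] g) x‖ ≤ ‖L‖ * (∫ t, ‖f t‖ ∂μ) * C :=
  calc ‖∫ t, L (f t) (g (x - t)) ∂μ‖ ≤ ∫ t, ‖L‖ * C * ‖f t‖ ∂μ :=
        norm_integral_le_of_norm_le (hf.norm.const_mul _) <| .of_forall fun t =>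
          (L.le_of_opNorm₂_le_of_le le_rfl le_rfl (hg _)).trans_eq (by ring)
    _ = ‖L‖ * (∫ t, ‖f t‖ ∂μ) * C := by rw [integral_const_mul]; ring

end ConvolutionBound

section IteratedConvolutionBound

universe u

/- `G`, `E'` and `F` share a universe because the induction replaces `E'` by `G →L[ℝ] E'`. -/
variable {E : Type*} {G E' F : Type u} [NormedAddCommGroup G] [NormedSpace ℝ G]
  [MeasurableSpace G] [BorelSpace G] {μ : Measure G} [SFinite μ] [μ.IsAddLeftInvariant]
  [NormedAddCommGroup E] [NormedSpace ℝ E] [NormedAddCommGroup E'] [NormedSpace ℝ E']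
  [NormedAddCommGroup F] [NormedSpace ℝ F] [CompleteSpace F]

/-- For `m = 0`, `g` may be discontinuous (it will be an indicator function). -/
theorem norm_iteratedFDeriv_convolution_le_of_norm_le {m : ℕ} (L : E →L[ℝ] E' →L[ℝ] F)
    {f : G → E} {g : G → E'} (hf : Integrable f μ) (hgc : HasCompactSupport g)
    (hg : m ≠ 0 → ContDiff ℝ m g) {C : ℝ} (hC : ∀ y, ‖iteratedFDeriv ℝ m g y‖ ≤ C) (x : G) :
    ‖iteratedFDeriv ℝ m (f ⋆[L, μ] g) x‖ ≤ ‖L‖ * (∫ t, ‖f t‖ ∂μ) * C := by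
  induction m generalizing E' F g C with
  | zero =>
    simpa only [norm_iteratedFDeriv_zero] using
      norm_convolution_le_of_norm_le L hf (fun y => by simpa using hC y) x
  | succ m ih =>
    have hg1 : ContDiff ℝ (m + 1) g := by exact_mod_cast hg m.succ_ne_zero
    have hD : fderiv ℝ (f ⋆[L, μ] g) = f ⋆[L.precompR G, μ] fderiv ℝ g := funext fun y =>
      (hgc.hasFDerivAt_convolution_right L hf.locallyIntegrable (hg1.of_le le_add_self) y).fderiv
    rw [← norm_iteratedFDeriv_fderiv, hD]
    refine (ih (L.precompR G) (hgc.fderiv ℝ) (fun _ => hg1.fderiv_right le_rfl)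
      (fun y => norm_iteratedFDeriv_fderiv.trans_le (hC y))).trans ?_
    have hC0 : 0 ≤ C := (norm_nonneg _).trans (hC 0)
    gcongr
    exact L.norm_precompR_le G

end IteratedConvolutionBound

section Mollifier

variable {E : Type} [NormedAddCommGroup E] [NormedSpace ℝ E] [MeasureSpace E]

structure IsMollifier (ψ : E → ℝ) (r : ℝ) : Prop where
  contDiff : ContDiff ℝ ∞ ψ
  nonneg : ∀ x, 0 ≤ ψ x
  integral_eq_one : ∫ x, ψ x = 1
  support_subset : support ψ ⊆ ball 0 r

variable {ψ u : E → ℝ} {r : ℝ}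

theorem IsMollifier.hasCompactSupport [ProperSpace E] (hψ : IsMollifier ψ r) :
    HasCompactSupport ψ :=
  .of_support_subset_isCompact (isCompact_closedBall 0 r)
    (hψ.support_subset.trans ball_subset_closedBall)

theorem IsMollifier.convolution_mem_Icc (hψ : IsMollifier ψ r)
    (hu : ∀ y, u y ∈ Icc (0 : ℝ) 1) (x : E) : (ψ ⋆ u) x ∈ Icc (0 : ℝ) 1 := by
  rw [convolution_lsmul]
  refine ⟨integral_nonneg fun t => mul_nonneg (hψ.nonneg t) (hu _).1, ?_⟩
  calc ∫ t, ψ t • u (x - t) ≤ ∫ t, ψ t :=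
        integral_mono_of_nonneg (.of_forall fun t => mul_nonneg (hψ.nonneg t) (hu _).1)
          (integrable_of_integral_eq_one hψ.integral_eq_one)
          (.of_forall fun t => mul_le_of_le_one_right (hψ.nonneg t) (hu _).2)
    _ = 1 := hψ.integral_eq_one

theorem IsMollifier.iterate_convolution_mem_Icc (hψ : IsMollifier ψ r)
    (hu : ∀ y, u y ∈ Icc (0 : ℝ) 1) (k : ℕ) (x : E) : ((ψ ⋆ ·)^[k] u) x ∈ Icc (0 : ℝ) 1 := by
  induction k generalizing x with
  | zero => exact hu x
  | succ k ih =>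
    rw [iterate_succ_apply']
    exact hψ.convolution_mem_Icc ih x

theorem IsMollifier.hasCompactSupport_iterate_convolution [ProperSpace E] (hψ : IsMollifier ψ r)
    (hu : HasCompactSupport u) (k : ℕ) : HasCompactSupport ((ψ ⋆ ·)^[k] u) := by
  induction k with
  | zero => exact hu
  | succ k ih =>
    rw [iterate_succ_apply']
    exact hψ.hasCompactSupport.convolution _ ih

variable [FiniteDimensional ℝ E] [BorelSpace E] [(volume : Measure E).IsAddHaarMeasure]

theorem IsMollifier.convolution_apply_eq_of_forall_ball (hψ : IsMollifier ψ r)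
    (hu : AEStronglyMeasurable u) {x : E} {c : ℝ} (hc : ∀ y ∈ ball x r, u y = c) :
    (ψ ⋆ u) x = c :=
  dist_le_zero.1 <| dist_convolution_le le_rfl hψ.support_subset hψ.nonneg hψ.integral_eq_one hu
    fun y hy => (hc y hy).symm ▸ (dist_self c).le

theorem IsMollifier.integrable_iterate_convolution (hψ : IsMollifier ψ r) (hu : Integrable u)
    (k : ℕ) : Integrable ((ψ ⋆ ·)^[k] u) := by
  induction k with
  | zero => exact hu
  | succ k ih =>
    rw [iterate_succ_apply']
    exact (integrable_of_integral_eq_one hψ.integral_eq_one).integrable_convolution _ ih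

theorem IsMollifier.contDiff_iterate_convolution (hψ : IsMollifier ψ r) (hu : Integrable u)
    {k : ℕ} (hk : k ≠ 0) : ContDiff ℝ ∞ ((ψ ⋆ ·)^[k] u) := by
  obtain ⟨k, rfl⟩ := Nat.exists_eq_succ_of_ne_zero hk
  rw [iterate_succ_apply']
  exact hψ.hasCompactSupport.contDiff_convolution_left _ hψ.contDiff
    (hψ.integrable_iterate_convolution hu k).locallyIntegrable

theorem IsMollifier.iterate_convolution_apply_eq_of_forall_closedBall (hψ : IsMollifier ψ r)
    (hu : Integrable u) {k : ℕ} {x : E} {c : ℝ} (hc : ∀ y ∈ closedBall x (k * r), u y = c) :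
    ((ψ ⋆ ·)^[k] u) x = c := by
  induction k generalizing x with
  | zero => exact hc x (by simp)
  | succ k ih =>
    rw [iterate_succ_apply']
    refine hψ.convolution_apply_eq_of_forall_ball (hψ.integrable_iterate_convolution hu k).1
      fun y hy => ih fun z hz => hc z (closedBall_subset_closedBall' ?_ hz)
    rw [mem_ball] at hy
    push_cast
    linarith

theorem IsMollifier.norm_iteratedFDeriv_iterate_convolution_le (hψ : IsMollifier ψ r)
    (hu : Integrable u) (huc : HasCompactSupport u) (hu01 : ∀ y, u y ∈ Icc (0 : ℝ) 1) {B : ℝ}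
    (hB : ∫ t, ‖fderiv ℝ ψ t‖ ≤ B) {j k : ℕ} (hjk : j ≤ k) (x : E) :
    ‖iteratedFDeriv ℝ j ((ψ ⋆ ·)^[k] u) x‖ ≤ B ^ j := by
  have h0 : ∀ k x, ‖iteratedFDeriv ℝ 0 ((ψ ⋆ ·)^[k] u) x‖ ≤ B ^ 0 := fun k x => by
    have := hψ.iterate_convolution_mem_Icc hu01 k x
    rw [norm_iteratedFDeriv_zero, pow_zero, Real.norm_of_nonneg this.1]
    exact this.2
  induction k generalizing j x with
  | zero => obtain rfl : j = 0 := Nat.le_zero.1 hjk; exact h0 0 x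
  | succ k ih =>
    rcases j with _ | i
    · exact h0 _ x
    set v := (ψ ⋆ ·)^[k] u
    have hD : fderiv ℝ (ψ ⋆ v) = fderiv ℝ ψ ⋆[(lsmul ℝ ℝ).precompL E, volume] v :=
      funext fun y => (hψ.hasCompactSupport.hasFDerivAt_convolution_left _
        (hψ.contDiff.of_le (by simp)) (hψ.integrable_iterate_convolution hu k).locallyIntegrable
        y).fderiv
    have hB0 : 0 ≤ B := (integral_nonneg fun _ => norm_nonneg _).trans hB
    rw [iterate_succ_apply', ← norm_iteratedFDeriv_fderiv, hD, pow_succ']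
    refine (norm_iteratedFDeriv_convolution_le_of_norm_le _
      ((hψ.contDiff.continuous_fderiv (by simp)).integrable_of_hasCompactSupport
        (hψ.hasCompactSupport.fderiv ℝ)) (hψ.hasCompactSupport_iterate_convolution huc k)
      (fun _ => (hψ.contDiff_iterate_convolution hu (by omega)).of_le (mod_cast le_top))
      (fun y => ih (by omega) y) x).trans ?_
    gcongr
    calc _ ≤ 1 * B := by
          gcongr
          exact (norm_precompL_le _ _).trans opNorm_lsmul_le
      _ = B := one_mul B

/-- `A` is `‖Dφ‖_{L¹}` for a fixed bump `φ`, and `ψ x = r⁻ⁿ φ (r⁻¹ x)`. -/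
theorem exists_isMollifier_integral_norm_fderiv_eq :
    ∃ A : ℝ, ∀ r > 0, ∃ ψ : E → ℝ, IsMollifier ψ r ∧ ∫ x, ‖fderiv ℝ ψ x‖ = A / r := by
  let φ := (⟨1 / 2, 1, by norm_num, by norm_num⟩ : ContDiffBump (0 : E)).normed volume
  have hφ : ContDiff ℝ ∞ φ := ContDiffBump.contDiff_normed _ (n := ⊤)
  refine ⟨∫ x, ‖fderiv ℝ φ x‖, fun r hr =>
    ⟨fun x => (r ^ finrank ℝ E)⁻¹ * φ (r⁻¹ • x), ⟨?_, ?_, ?_, ?_⟩, ?_⟩⟩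
  · exact contDiff_const.mul (hφ.comp (contDiff_const_smul _))
  · exact fun x => mul_nonneg (by positivity) (ContDiffBump.nonneg_normed _ _)
  · rw [integral_const_mul, Measure.integral_comp_inv_smul_of_nonneg volume _ hr.le,
      ContDiffBump.integral_normed, smul_eq_mul, mul_one, inv_mul_cancel₀ (by positivity)]
  · intro x hx
    have hφx : r⁻¹ • x ∈ support φ := right_ne_zero_of_mul hx
    rw [ContDiffBump.support_normed_eq, mem_ball_zero_iff, norm_smul, Real.norm_eq_abs,
      abs_of_pos (inv_pos.2 hr), inv_mul_lt_iff₀ hr, mul_one] at hφx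
    exact mem_ball_zero_iff.2 hφx
  · have hdiff : Differentiable ℝ fun x => φ (r⁻¹ • x) :=
      (hφ.differentiable (by simp)).comp (differentiable_id.const_smul _)
    have hD : ∀ x, ‖fderiv ℝ (fun x => (r ^ finrank ℝ E)⁻¹ * φ (r⁻¹ • x)) x‖
        = (r ^ finrank ℝ E)⁻¹ * r⁻¹ * ‖fderiv ℝ φ (r⁻¹ • x)‖ := fun x => by
      rw [fderiv_const_mul (hdiff x), fderiv_comp_smul, norm_smul, norm_smul, Real.norm_eq_abs,
        Real.norm_eq_abs, abs_of_pos (by positivity), abs_of_pos (by positivity), mul_assoc]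
    simp_rw [hD, integral_const_mul,
      Measure.integral_comp_inv_smul_of_nonneg volume (fun x => ‖fderiv ℝ φ x‖) hr.le,
      smul_eq_mul]
    field_simp

end Mollifier

theorem stmt_0_general (d : ℕ)
    (K L : Set (EuclideanSpace ℝ (Fin d)))
    (hK : IsCompact K) (hL : IsClosed L) (hKL : K ∩ L = ∅) :
    ∃ ρ : ℝ, 0 < ρ ∧ ∃ χ : ℕ → EuclideanSpace ℝ (Fin d) → ℝ,
      ∀ N : ℕ, 1 ≤ N →
        ContDiff ℝ (⊤ : ℕ∞) (χ N) ∧ HasCompactSupport (χ N) ∧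
        (∀ x, χ N x ∈ Set.Icc (0 : ℝ) 1) ∧
        (∀ x ∈ K, χ N x = 1) ∧
        (∀ x ∈ L, χ N x = 0) ∧
        (∀ j : ℕ, j ≤ N → ∀ x, ‖iteratedFDeriv ℝ j (χ N) x‖ ≤ (ρ * N) ^ j) := by
  obtain ⟨δ, hδ, hdisj⟩ := (disjoint_iff_inter_eq_empty.2 hKL).exists_cthickenings hK hL
  obtain ⟨A, hA⟩ := exists_isMollifier_integral_norm_fderiv_eq (E := EuclideanSpace ℝ (Fin d))
  choose! ψ hψ hψA using hA
  set u := (cthickening δ K).indicator (1 : EuclideanSpace ℝ (Fin d) → ℝ)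
  have hKδ : IsCompact (cthickening δ K) := hK.cthickening
  have hu : Integrable u :=
    (integrableOn_const hKδ.measure_lt_top.ne).integrable_indicator hKδ.measurableSet
  have huc : HasCompactSupport u := .of_support_subset_isCompact hKδ support_indicator_subset
  have hu01 : ∀ y, u y ∈ Icc (0 : ℝ) 1 := fun y => by
    by_cases hy : y ∈ cthickening δ K <;> simp [u, hy]
  refine ⟨max (A / δ) 1, by positivity, fun N => (ψ (δ / N) ⋆ ·)^[N] u, fun N hN => ?_⟩
  have hr : 0 < δ / N := by positivity
  have hNr : (N : ℝ) * (δ / N) = δ := by field_simp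
  have hψN := hψ _ hr
  refine ⟨hψN.contDiff_iterate_convolution hu (by omega),
    hψN.hasCompactSupport_iterate_convolution huc N, hψN.iterate_convolution_mem_Icc hu01 N,
    fun x hx => hψN.iterate_convolution_apply_eq_of_forall_closedBall hu fun y hy => ?_,
    fun x hx => hψN.iterate_convolution_apply_eq_of_forall_closedBall hu fun y hy => ?_,
    fun j hj x => hψN.norm_iteratedFDeriv_iterate_convolution_le hu huc hu01 ?_ hj x⟩
  · rw [hNr] at hy
    exact indicator_of_mem (closedBall_subset_cthickening hx δ hy) _
  · rw [hNr] at hy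
    exact indicator_of_notMem
      (hdisj.symm.notMem_of_mem_left (closedBall_subset_cthickening hx δ hy)) _
  · calc ∫ t, ‖fderiv ℝ (ψ (δ / N)) t‖ = A / δ * N := by rw [hψA _ hr]; field_simp
      _ ≤ max (A / δ) 1 * N := by gcongr; exact le_max_left _ _

/-- **Ehrenpreis cutoffs.** If `K ⊆ ℝ^d` is compact and `L ⊆ ℝ^d` is closed with
`K ∩ L = ∅`, there are `ρ > 0` and smooth compactly supported cutoffs `χ_N` with values
in `[0,1]`, equal to `1` on `K` and `0` on `L`, whose derivatives of order `j ≤ N` are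
bounded by `(ρ N)^j`. -/
theorem stmt_0 (d : ℕ) (hd : 1 ≤ d)
    (K L : Set (EuclideanSpace ℝ (Fin d)))
    (hK : IsCompact K) (hL : IsClosed L) (hKL : K ∩ L = ∅) :
    ∃ ρ : ℝ, 0 < ρ ∧ ∃ χ : ℕ → EuclideanSpace ℝ (Fin d) → ℝ,
      ∀ N : ℕ, 1 ≤ N →
        ContDiff ℝ (⊤ : ℕ∞) (χ N) ∧ HasCompactSupport (χ N) ∧
        (∀ x, χ N x ∈ Set.Icc (0 : ℝ) 1) ∧
        (∀ x ∈ K, χ N x = 1) ∧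
        (∀ x ∈ L, χ N x = 0) ∧
        (∀ j : ℕ, j ≤ N → ∀ x, ‖iteratedFDeriv ℝ j (χ N) x‖ ≤ (ρ * N) ^ j) :=
  stmt_0_general d K L hK hL hKL
end

section
/- Let n ≥ 2, let σ denote the surface measure on the unit sphere S^{n-1} ⊆ ℝ^n, and let m_n(ξ) = ∫_{S^{n-1}} exp(⟨y,ξ⟩) dσ(y) for ξ ∈ ℝ^n. Then for every z, w ∈ ℂ^n with ‖Im z + Im w‖ < 2, the function ξ ↦ exp(i (z − w̄)⋅ξ) / m_n(2ξ) is Lebesgue integrable on ℝ^n, where for u ∈ ℂ^n and ξ ∈ ℝ^n we write u⋅ξ = Σ_j u_j ξ_j (bilinear pairing) and w̄ is the componentwise complex conjugate. -/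
/-
Put `a = Im z + Im w`, so that the numerator has modulus `exp (-⟪a, ξ⟫) ≤ exp (‖a‖ ‖ξ‖)`.
For the denominator, restrict the integral defining `m (2ξ)` to the spherical cap
`{y : t ≤ ⟪ξ / ‖ξ‖, y⟫}`, where the integrand is at least `exp (2t ‖ξ‖)`. Reflections are
isometries, so all caps of height `t` have the same `(n-1)`-dimensional Hausdorff measure `c`;
it is positive for `t < 1`, since the cap projects onto an `(n-1)`-ball, and finite, since the
sphere is covered by the radial projections of the `2n` faces of the cube `[-1, 1]ⁿ`, which are
Lipschitz images of `(n-1)`-cubes. Taking `‖a‖ / 2 < t < 1` bounds the integrand by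
`c⁻¹ exp (-(2t - ‖a‖) ‖ξ‖)`, which is integrable.
-/

open MeasureTheory Metric RealInnerProductSpace
open Real Set

lemma dist_inv_norm_smul_le {F : Type*} [NormedAddCommGroup F] [NormedSpace ℝ F] {x y : F}
    (hx : 1 ≤ ‖x‖) (hy : y ≠ 0) : dist (‖x‖⁻¹ • x) (‖y‖⁻¹ • y) ≤ 2 * dist x y := by
  have hx0 : 0 < ‖x‖ := one_pos.trans_le hx
  have hy0 : 0 < ‖y‖ := norm_pos_iff.2 hy
  have hsplit : ‖x‖⁻¹ • x - ‖y‖⁻¹ • y = ‖x‖⁻¹ • (x - y) + (‖x‖⁻¹ - ‖y‖⁻¹) • y := by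
    rw [smul_sub, sub_smul]; abel
  have hrad : ‖(‖x‖⁻¹ - ‖y‖⁻¹) • y‖ ≤ ‖x‖⁻¹ * ‖x - y‖ := by
    have h : (‖x‖⁻¹ - ‖y‖⁻¹) * ‖y‖ = ‖x‖⁻¹ * (‖y‖ - ‖x‖) := by field_simp
    calc ‖(‖x‖⁻¹ - ‖y‖⁻¹) • y‖ = |(‖x‖⁻¹ - ‖y‖⁻¹) * ‖y‖| := by
          rw [norm_smul, Real.norm_eq_abs, abs_mul, abs_norm]
      _ = ‖x‖⁻¹ * |‖y‖ - ‖x‖| := by rw [h, abs_mul, abs_of_pos (inv_pos.2 hx0)]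
      _ ≤ ‖x‖⁻¹ * ‖x - y‖ := by
          gcongr
          exact (abs_norm_sub_norm_le y x).trans_eq (norm_sub_rev y x)
  have hinv : ‖x‖⁻¹ ≤ 1 := inv_le_one_of_one_le₀ hx
  rw [dist_eq_norm, dist_eq_norm, hsplit]
  calc ‖‖x‖⁻¹ • (x - y) + (‖x‖⁻¹ - ‖y‖⁻¹) • y‖
      ≤ ‖x‖⁻¹ * ‖x - y‖ + ‖x‖⁻¹ * ‖x - y‖ := by
        refine (norm_add_le _ _).trans (add_le_add ?_ hrad)
        rw [norm_smul, Real.norm_of_nonneg (by positivity)]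
    _ ≤ 2 * ‖x - y‖ := by nlinarith [norm_nonneg (x - y)]

lemma integrable_exp_neg_mul_norm {F : Type*} [NormedAddCommGroup F] [NormedSpace ℝ F]
    [FiniteDimensional ℝ F] [Nontrivial F] [MeasurableSpace F] [BorelSpace F]
    (μ : Measure F) [μ.IsAddHaarMeasure] {ε : ℝ} (hε : 0 < ε) :
    Integrable (fun x => exp (-(ε * ‖x‖))) μ := by
  rw [integrable_fun_norm_addHaar μ (f := fun r => exp (-(ε * r)))]
  refine (integrableOn_rpow_mul_exp_neg_mul_rpow (s := (Module.finrank ℝ F - 1 : ℕ)) (p := 1)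
    (neg_one_lt_zero.trans_le (Nat.cast_nonneg _)) one_pos hε).congr_fun
    (fun r _ => ?_) measurableSet_Ioi
  simp [Real.rpow_natCast]

section SphericalCap

variable {E : Type*} [NormedAddCommGroup E] [InnerProductSpace ℝ E]

def sphericalCap (v : E) (t : ℝ) : Set E := sphere 0 1 ∩ {y | t ≤ ⟪v, y⟫}

lemma isClosed_sphericalCap (v : E) (t : ℝ) : IsClosed (sphericalCap v t) :=
  isClosed_sphere.inter (isClosed_le continuous_const (continuous_const.inner continuous_id))

lemma preimage_reflection_sphericalCap {u v : E} (h : ‖u‖ = ‖v‖) (t : ℝ) :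
    Submodule.reflection (ℝ ∙ (u - v))ᗮ ⁻¹' sphericalCap u t = sphericalCap v t := by
  set R := Submodule.reflection (ℝ ∙ (u - v))ᗮ
  have hinner (y : E) : ⟪u, R y⟫ = ⟪v, y⟫ := by
    rw [← R.inner_map_map, Submodule.reflection_reflection, Submodule.reflection_sub h]
  ext y
  simp [sphericalCap, hinner]

variable [MeasurableSpace E] [BorelSpace E]

lemma hausdorffMeasure_sphericalCap_eq (d t : ℝ) {u v : E} (h : ‖u‖ = ‖v‖) :
    μH[d] (sphericalCap u t) = μH[d] (sphericalCap v t) := by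
  set R := Submodule.reflection (ℝ ∙ (u - v))ᗮ
  have himage := R.symm.image_eq_preimage_symm (sphericalCap u t)
  rw [R.symm_symm, preimage_reflection_sphericalCap h] at himage
  rw [← himage, R.symm.isometry.hausdorffMeasure_image (Or.inr R.symm.surjective)]

lemma integrableOn_sphere_exp_inner {μ : Measure E} (hμ : μ (sphere 0 1) ≠ ⊤) (ξ : E) :
    IntegrableOn (fun y => exp ⟪y, ξ⟫) (sphere 0 1) μ := by
  refine Measure.integrableOn_of_bounded (M := exp ‖ξ‖) hμ
    (continuous_exp.comp (continuous_id.inner continuous_const)).aestronglyMeasurable ?_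
  filter_upwards [ae_restrict_mem isClosed_sphere.measurableSet] with y hy
  rw [norm_of_nonneg (exp_nonneg _), exp_le_exp]
  simpa [mem_sphere_zero_iff_norm.1 hy] using real_inner_le_norm y ξ

lemma measureReal_sphericalCap_mul_exp_le {μ : Measure E} (hμ : μ (sphere 0 1) ≠ ⊤) (v : E) (t : ℝ)
    {r : ℝ} (hr : 0 ≤ r) :
    μ.real (sphericalCap v t) * exp (t * r) ≤ ∫ y in sphere 0 1, exp ⟪y, r • v⟫ ∂μ := by
  have hcap : sphericalCap v t ⊆ sphere 0 1 := inter_subset_left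
  calc μ.real (sphericalCap v t) * exp (t * r) ≤ ∫ y in sphericalCap v t, exp ⟪y, r • v⟫ ∂μ := by
        rw [mul_comm]
        refine setIntegral_ge_of_const_le_real (isClosed_sphericalCap v t).measurableSet
          (measure_ne_top_of_subset hcap hμ) (fun y hy => ?_)
          ((integrableOn_sphere_exp_inner hμ _).mono_set hcap)
        rw [exp_le_exp, real_inner_smul_right, real_inner_comm, mul_comm t]
        exact mul_le_mul_of_nonneg_left hy.2 hr
    _ ≤ ∫ y in sphere 0 1, exp ⟪y, r • v⟫ ∂μ :=
        setIntegral_mono_set (integrableOn_sphere_exp_inner hμ _)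
          (.of_forall fun _ => exp_nonneg _) hcap.eventuallyLE

lemma measurable_setIntegral_sphere_exp_inner [SecondCountableTopology E] {μ : Measure E}
    (hμ : μ (sphere 0 1) ≠ ⊤) : Measurable fun ξ : E => ∫ y in sphere 0 1, exp ⟪y, ξ⟫ ∂μ := by
  have := isFiniteMeasure_restrict.2 hμ
  exact (continuous_exp.comp (continuous_snd.inner continuous_fst)).stronglyMeasurable
    |>.integral_prod_right' |>.measurable

lemma hausdorffMeasure_real_sphericalCap_mul_exp_le {d : ℝ}
    (hμ : μH[d] (sphere (0 : E) 1) ≠ ⊤) {e : E} (he : ‖e‖ = 1) (t : ℝ) (ξ : E) :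
    (μH[d] : Measure E).real (sphericalCap e t) * exp (t * ‖ξ‖) ≤
      ∫ y in sphere 0 1, exp ⟪y, ξ⟫ ∂μH[d] := by
  obtain ⟨v, hv, hξ⟩ : ∃ v : E, ‖v‖ = 1 ∧ ξ = ‖ξ‖ • v := by
    rcases eq_or_ne ξ 0 with rfl | h
    · exact ⟨e, he, by simp⟩
    · exact ⟨‖ξ‖⁻¹ • ξ, norm_smul_inv_norm h, by rw [smul_inv_smul₀ (norm_ne_zero_iff.2 h)]⟩
  rw [Measure.real, hausdorffMeasure_sphericalCap_eq d t (he.trans hv.symm)]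
  conv_rhs => rw [hξ]
  exact measureReal_sphericalCap_mul_exp_le hμ v t (norm_nonneg ξ)

end SphericalCap

section Coordinates

variable {k : ℕ}

def insertCoord (j : Fin (k + 1)) (a : ℝ) (x : EuclideanSpace ℝ (Fin k)) :
    EuclideanSpace ℝ (Fin (k + 1)) :=
  WithLp.toLp 2 (Fin.insertNth j a x)

def removeCoord (j : Fin (k + 1)) (y : EuclideanSpace ℝ (Fin (k + 1))) :
    EuclideanSpace ℝ (Fin k) :=
  WithLp.toLp 2 (j.removeNth y)

lemma norm_insertCoord_sq (j : Fin (k + 1)) (a : ℝ) (x : EuclideanSpace ℝ (Fin k)) :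
    ‖insertCoord j a x‖ ^ 2 = a ^ 2 + ‖x‖ ^ 2 := by
  simp [EuclideanSpace.norm_sq_eq, insertCoord, Fin.sum_univ_succAbove _ j]

lemma insertCoord_sub (j : Fin (k + 1)) (a b : ℝ) (x y : EuclideanSpace ℝ (Fin k)) :
    insertCoord j a x - insertCoord j b y = insertCoord j (a - b) (x - y) := by
  ext i
  cases i using j.succAboveCases <;> simp [insertCoord]

lemma insertCoord_removeCoord (j : Fin (k + 1)) (y : EuclideanSpace ℝ (Fin (k + 1))) :
    insertCoord j (y j) (removeCoord j y) = y := by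
  ext i
  simp [insertCoord, removeCoord]

lemma removeCoord_insertCoord (j : Fin (k + 1)) (a : ℝ) (x : EuclideanSpace ℝ (Fin k)) :
    removeCoord j (insertCoord j a x) = x := by
  ext i
  simp [insertCoord, removeCoord]

lemma dist_insertCoord_sq (j : Fin (k + 1)) (a b : ℝ) (x y : EuclideanSpace ℝ (Fin k)) :
    dist (insertCoord j a x) (insertCoord j b y) ^ 2 = (a - b) ^ 2 + dist x y ^ 2 := by
  rw [dist_eq_norm, dist_eq_norm, insertCoord_sub, norm_insertCoord_sq]

lemma isometry_insertCoord (j : Fin (k + 1)) (a : ℝ) : Isometry (insertCoord j a) :=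
  Isometry.of_dist_eq fun x y => by
    rw [← sq_eq_sq₀ dist_nonneg dist_nonneg, dist_insertCoord_sq, sub_self]
    ring

lemma lipschitzWith_removeCoord (j : Fin (k + 1)) : LipschitzWith 1 (removeCoord j) := by
  refine LipschitzWith.of_dist_le_mul fun y y' => ?_
  rw [NNReal.coe_one, one_mul, ← sq_le_sq₀ dist_nonneg dist_nonneg]
  conv_rhs =>
    rw [← insertCoord_removeCoord j y, ← insertCoord_removeCoord j y', dist_insertCoord_sq]
  nlinarith [sq_nonneg (y j - y' j)]

lemma lipschitzWith_normalize_insertCoord (j : Fin (k + 1)) {s : ℝ} (hs : 1 ≤ |s|) :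
    LipschitzWith 2 fun x => ‖insertCoord j s x‖⁻¹ • insertCoord j s x := by
  have hnorm (x : EuclideanSpace ℝ (Fin k)) : 1 ≤ ‖insertCoord j s x‖ := by
    rw [← one_le_sq_iff₀ (norm_nonneg _), norm_insertCoord_sq, ← sq_abs]
    nlinarith [sq_nonneg ‖x‖]
  refine LipschitzWith.of_dist_le_mul fun x y => ?_
  rw [← (isometry_insertCoord j s).dist_eq]
  exact dist_inv_norm_smul_le (hnorm x) (norm_pos_iff.1 (one_pos.trans_le (hnorm y)))

lemma isCompact_setOf_forall_abs_le_one :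
    IsCompact {x : EuclideanSpace ℝ (Fin k) | ∀ i, |x i| ≤ 1} := by
  have : {x : EuclideanSpace ℝ (Fin k) | ∀ i, |x i| ≤ 1} = WithLp.ofLp ⁻¹' Icc (-1) 1 := by
    ext x
    simp [abs_le, Pi.le_def, forall_and]
  rw [this]
  exact (PiLp.homeomorph 2 _).isCompact_preimage.2 isCompact_Icc

lemma sphere_subset_iUnion_normalize_insertCoord :
    sphere (0 : EuclideanSpace ℝ (Fin (k + 1))) 1 ⊆
      ⋃ j, ⋃ s ∈ ({-1, 1} : Set ℝ),
        (fun x => ‖insertCoord j s x‖⁻¹ • insertCoord j s x) '' {x | ∀ i, |x i| ≤ 1} := by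
  intro y hy
  rw [mem_sphere_zero_iff_norm] at hy
  obtain ⟨j, hj⟩ := Finite.exists_max fun i => |y i|
  have hyj : 0 < |y j| := by
    by_contra! h
    have : y = 0 := by ext i; simpa using (hj i).trans h
    simp [this] at hy
  set p := |y j|⁻¹ • y
  have hp : ‖p‖⁻¹ • p = y := by
    rw [norm_smul, hy, mul_one, norm_inv, Real.norm_eq_abs, abs_abs, inv_inv,
      smul_inv_smul₀ hyj.ne']
  simp only [mem_iUnion, mem_image]
  refine ⟨j, p j, ?_, removeCoord j p, fun i => ?_, by rw [insertCoord_removeCoord, hp]⟩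
  · have hpj : p j = y j / |y j| := by simp [p, div_eq_inv_mul]
    rcases abs_choice (y j) with h | h <;> simp [hpj, h, abs_pos.1 hyj]
  · simp only [removeCoord, Fin.removeNth, p, PiLp.smul_apply, smul_eq_mul, abs_mul, abs_inv,
      abs_abs]
    rw [inv_mul_le_iff₀ hyj, mul_one]
    exact hj _

instance (k : ℕ) : (μH[k] : Measure (EuclideanSpace ℝ (Fin k))).IsAddHaarMeasure := by
  simpa using isAddHaarMeasure_hausdorffMeasure (E := EuclideanSpace ℝ (Fin k))

lemma hausdorffMeasure_sphere_lt_top :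
    μH[k] (sphere (0 : EuclideanSpace ℝ (Fin (k + 1))) 1) < ⊤ := by
  refine (measure_mono sphere_subset_iUnion_normalize_insertCoord).trans_lt <|
    (measure_iUnion_fintype_le _ _).trans_lt <|
    ENNReal.sum_lt_top.2 fun j _ => measure_biUnion_lt_top (toFinite _) fun s hs => ?_
  have hs : 1 ≤ |s| := by rcases hs with rfl | rfl <;> simp
  refine ((lipschitzWith_normalize_insertCoord j hs).hausdorffMeasure_image_le
    (Nat.cast_nonneg k) _).trans_lt (ENNReal.mul_lt_top (by simp) ?_)
  exact isCompact_setOf_forall_abs_le_one.measure_lt_top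

lemma hausdorffMeasure_sphericalCap_single_pos (j : Fin (k + 1)) {t : ℝ} (ht0 : 0 ≤ t)
    (ht1 : t < 1) : 0 < μH[k] (sphericalCap (EuclideanSpace.single j (1 : ℝ)) t) := by
  set C := sphericalCap (EuclideanSpace.single j (1 : ℝ)) t
  set ρ := √(1 - t ^ 2)
  have hρ : 0 < ρ := Real.sqrt_pos.2 (by nlinarith)
  have hball : closedBall 0 ρ ⊆ removeCoord j '' C := by
    intro x hx
    rw [mem_closedBall_zero_iff] at hx
    have hx2 : ‖x‖ ^ 2 ≤ 1 - t ^ 2 :=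
      (pow_le_pow_left₀ (norm_nonneg x) hx 2).trans_eq (Real.sq_sqrt (by nlinarith))
    refine ⟨insertCoord j √(1 - ‖x‖ ^ 2) x, ⟨?_, ?_⟩, removeCoord_insertCoord _ _ _⟩
    · rw [mem_sphere_zero_iff_norm, ← pow_eq_one_iff_of_nonneg (norm_nonneg _) two_ne_zero,
        norm_insertCoord_sq, Real.sq_sqrt (by nlinarith)]
      ring
    · show t ≤ ⟪EuclideanSpace.single j (1 : ℝ), insertCoord j √(1 - ‖x‖ ^ 2) x⟫
      simp only [EuclideanSpace.inner_single_left, insertCoord, Fin.insertNth_apply_same]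
      simpa using Real.le_sqrt_of_sq_le (by linarith : t ^ 2 ≤ 1 - ‖x‖ ^ 2)
  calc 0 < μH[k] (closedBall (0 : EuclideanSpace ℝ (Fin k)) ρ) := measure_closedBall_pos _ _ hρ
    _ ≤ μH[k] (removeCoord j '' C) := measure_mono hball
    _ ≤ μH[k] C := by
      simpa using (lipschitzWith_removeCoord j).hausdorffMeasure_image_le (Nat.cast_nonneg k) _

end Coordinates

lemma norm_cexp_I_mul_sum {n : ℕ} (z w : Fin n → ℂ) (ξ : EuclideanSpace ℝ (Fin n)) :
    ‖Complex.exp (Complex.I * ∑ j, (z j - starRingEnd ℂ (w j)) * (ξ j : ℂ))‖ =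
      exp (-⟪WithLp.toLp 2 (fun j => (z j).im + (w j).im), ξ⟫) := by
  rw [Complex.norm_exp]
  simp [Complex.mul_re, Complex.im_sum, PiLp.inner_apply, mul_comm]

lemma exp_neg_inner_div_le {E : Type*} [NormedAddCommGroup E] [InnerProductSpace ℝ E]
    {a ξ : E} {c s M : ℝ} (hc : 0 < c) (hM : c * exp (s * ‖ξ‖) ≤ M) :
    exp (-⟪a, ξ⟫) / M ≤ c⁻¹ * exp (-((s - ‖a‖) * ‖ξ‖)) :=
  calc exp (-⟪a, ξ⟫) / M ≤ exp (‖a‖ * ‖ξ‖) / (c * exp (s * ‖ξ‖)) :=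
        div_le_div₀ (exp_nonneg _)
          (exp_le_exp.2 ((neg_le_abs _).trans (abs_real_inner_le_norm a ξ))) (by positivity) hM
    _ = c⁻¹ * exp (-((s - ‖a‖) * ‖ξ‖)) := by
        rw [mul_comm c, ← div_div, ← exp_sub, div_eq_inv_mul]
        ring_nf

/-- **Absolute convergence of the Szegő kernel integral of the tube** `ℝ^n × B(0,1)`:
if `‖Im z + Im w‖ < 2` then `ξ ↦ exp(i (z − w̄)⋅ξ) / m_n(2ξ)` is Lebesgue integrable on
`ℝ^n`, where `m_n(ξ) = ∫_{S^{n-1}} exp(⟨y,ξ⟫) dσ(y)` and `σ` is the surface measure on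
the unit sphere. -/
theorem stmt_2 (n : ℕ) (hn : 2 ≤ n)
    (m : EuclideanSpace ℝ (Fin n) → ℝ)
    (hm : ∀ ξ, m ξ =
      ∫ y in sphere (0 : EuclideanSpace ℝ (Fin n)) 1,
        Real.exp ⟪y, ξ⟫ ∂(μH[(n : ℝ) - 1]))
    (z w : Fin n → ℂ)
    (hzw : ‖(show EuclideanSpace ℝ (Fin n) from WithLp.toLp 2 fun j => (z j).im + (w j).im)‖ < 2) :
    Integrable (fun ξ : EuclideanSpace ℝ (Fin n) =>
      Complex.exp (Complex.I * ∑ j, (z j - starRingEnd ℂ (w j)) * (ξ j : ℂ))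
        / (m ((2 : ℝ) • ξ) : ℂ)) := by
  obtain ⟨k, rfl⟩ : ∃ k, n = k + 1 := ⟨n - 1, by omega⟩
  rw [show ((k + 1 : ℕ) : ℝ) - 1 = k by push_cast; ring] at hm
  set a : EuclideanSpace ℝ (Fin (k + 1)) := WithLp.toLp 2 fun j => (z j).im + (w j).im
  have ha : ‖a‖ < 2 := hzw
  set t := (2 + ‖a‖) / 4 with ht
  set c := (μH[k] : Measure (EuclideanSpace ℝ (Fin (k + 1)))).real
    (sphericalCap (EuclideanSpace.single 0 (1 : ℝ)) t)
  have hsphere := (hausdorffMeasure_sphere_lt_top (k := k)).ne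
  have hc : 0 < c := ENNReal.toReal_pos
    (hausdorffMeasure_sphericalCap_single_pos 0 (by positivity) (by linarith)).ne'
    (measure_ne_top_of_subset inter_subset_left hsphere)
  have hlow (ξ : EuclideanSpace ℝ (Fin (k + 1))) : c * exp (2 * t * ‖ξ‖) ≤ m ((2 : ℝ) • ξ) := by
    simpa [hm, norm_smul, mul_left_comm, mul_assoc] using
      hausdorffMeasure_real_sphericalCap_mul_exp_le hsphere (by simp) t ((2 : ℝ) • ξ)
  have hmeas : Measurable m := by
    rw [funext hm]
    exact measurable_setIntegral_sphere_exp_inner hsphere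
  refine ((integrable_exp_neg_mul_norm volume (ε := 2 * t - ‖a‖) (by linarith)).const_mul c⁻¹).mono'
    (Measurable.div (by fun_prop) (by fun_prop)).aestronglyMeasurable (.of_forall fun ξ => ?_)
  have hmpos : 0 < m ((2 : ℝ) • ξ) := (by positivity : 0 < c * _).trans_le (hlow ξ)
  rw [norm_div, norm_cexp_I_mul_sum, Complex.norm_real, norm_of_nonneg hmpos.le]
  exact exp_neg_inner_div_le hc (hlow ξ)
end

section
/- Let n ≥ 1 and write u⋅v = Σ_j u_j v_j for the bilinear pairing on ℂ^n and u² = u⋅u. Let x, y₁, y₂, ω, η₁, η₂ ∈ ℂ^n and let t₁, t₂ be positive real numbers. Suppose: (i) ω⋅ω = 1; (ii) η₂ = t₂(ω + i(x − y₂)); (iii) η₁ = t₁(ω − i(x − y₁)); (iv) t₂(ω + i(x − y₂)) = t₁(ω − i(x − y₁)); (v) t₂(x − y₂) = t₁(x − y₁); (vi) (x − y₂)⋅ω = −(i/2)(x − y₂)²; (vii) (y₁ − x)⋅ω = −(i/2)(x − y₁)². Then η₁ = η₂, t₁ = t₂, and y₁ = y₂. -/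
/-- **The composition `Λ_{T*} ∘ Λ_T` of the canonical relations of the FBI transform and
its adjoint is the diagonal**: the defining equations of a point of the composition lying
over `((y₁,η₁),(y₂,η₂))` force `η₁ = η₂`, `t₁ = t₂` and `y₁ = y₂`.  Here `u⋅v = Σ u_j v_j`
is the bilinear pairing on `ℂ^n`. -/
theorem stmt_5 (n : ℕ) (hn : 1 ≤ n)
    (x y₁ y₂ ω η₁ η₂ : Fin n → ℂ) (t₁ t₂ : ℝ) (ht₁ : 0 < t₁) (ht₂ : 0 < t₂)
    (hω : ∑ j, ω j * ω j = 1)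
    (h2 : η₂ = fun j => (t₂ : ℂ) * (ω j + Complex.I * (x j - y₂ j)))
    (h3 : η₁ = fun j => (t₁ : ℂ) * (ω j - Complex.I * (x j - y₁ j)))
    (h4 : ∀ j, (t₂ : ℂ) * (ω j + Complex.I * (x j - y₂ j))
        = (t₁ : ℂ) * (ω j - Complex.I * (x j - y₁ j)))
    (h5 : ∀ j, (t₂ : ℂ) * (x j - y₂ j) = (t₁ : ℂ) * (x j - y₁ j))
    (h6 : ∑ j, (x j - y₂ j) * ω j = -(Complex.I / 2) * ∑ j, (x j - y₂ j) * (x j - y₂ j))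
    (h7 : ∑ j, (y₁ j - x j) * ω j = -(Complex.I / 2) * ∑ j, (x j - y₁ j) * (x j - y₁ j)) :
    η₁ = η₂ ∧ t₁ = t₂ ∧ y₁ = y₂ := by
  have key : ∀ j, ((t₂ : ℂ) - t₁) * ω j = -2 * Complex.I * t₁ * (x j - y₁ j) := by
    intro j
    linear_combination h4 j - Complex.I * h5 j
  set A : ℂ := ∑ j, (x j - y₁ j) * (x j - y₁ j) with hA
  have haw : ∑ j, (x j - y₁ j) * ω j = Complex.I / 2 * A := by
    have hsum : ∑ j, (y₁ j - x j) * ω j = -∑ j, (x j - y₁ j) * ω j := by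
      rw [← Finset.sum_neg_distrib]
      exact Finset.sum_congr rfl fun j _ => by ring
    rw [hsum] at h7
    linear_combination -h7
  have eq1 : ((t₂ : ℂ) - t₁) = t₁ * A := by
    have h1 : ∑ j, ((t₂ : ℂ) - t₁) * (ω j * ω j)
        = ∑ j, (-2 * Complex.I * t₁) * ((x j - y₁ j) * ω j) :=
      Finset.sum_congr rfl fun j _ => by linear_combination (ω j) * key j
    rw [← Finset.mul_sum, ← Finset.mul_sum, hω, haw] at h1
    linear_combination h1 - t₁ * A * Complex.I_mul_I
  have eq2 : ((t₂ : ℂ) - t₁) ^ 2 = -4 * t₁ ^ 2 * A := by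
    calc ((t₂ : ℂ) - t₁) ^ 2 = ((t₂ : ℂ) - t₁) ^ 2 * ∑ j, ω j * ω j := by rw [hω]; ring
    _ = ∑ j, (((t₂ : ℂ) - t₁) * ω j) * (((t₂ : ℂ) - t₁) * ω j) := by
        rw [Finset.mul_sum]; exact Finset.sum_congr rfl fun j _ => by ring
    _ = ∑ j, (-2 * Complex.I * t₁ * (x j - y₁ j)) * (-2 * Complex.I * t₁ * (x j - y₁ j)) :=
        Finset.sum_congr rfl fun j _ => by rw [key j]
    _ = -4 * t₁ ^ 2 * A := by
        rw [hA, Finset.mul_sum]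
        refine Finset.sum_congr rfl fun j _ => ?_
        linear_combination (4 * (t₁ : ℂ) ^ 2 * (x j - y₁ j) * (x j - y₁ j)) * Complex.I_mul_I
  have hfac : ((t₂ : ℂ) - t₁) * (((t₂ : ℂ) - t₁) + 4 * t₁) = 0 := by
    linear_combination eq2 + 4 * (t₁ : ℂ) * eq1
  have hs : (t₂ : ℂ) - t₁ = 0 := by
    rcases mul_eq_zero.mp hfac with h | h
    · exact h
    · exfalso
      have : ((t₂ + 3 * t₁ : ℝ) : ℂ) = 0 := by push_cast; linear_combination h
      have h0 : (t₂ + 3 * t₁ : ℝ) = 0 := by exact_mod_cast this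
      nlinarith
  have htt : t₁ = t₂ := by
    have : (t₂ : ℂ) = (t₁ : ℂ) := by linear_combination hs
    exact_mod_cast this.symm
  have hIt : (-2 : ℂ) * Complex.I * t₁ ≠ 0 := by
    simp [Complex.I_ne_zero, Complex.ext_iff]
    exact_mod_cast ht₁.ne'
  have ha : ∀ j, x j - y₁ j = 0 := by
    intro j
    have := key j
    rw [hs, zero_mul] at this
    exact (mul_eq_zero.mp this.symm).resolve_left hIt
  have hb : ∀ j, x j - y₂ j = 0 := by
    intro j
    have h := h5 j
    rw [ha j, mul_zero] at h
    have ht2 : (t₂ : ℂ) ≠ 0 := by exact_mod_cast ht₂.ne'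
    exact (mul_eq_zero.mp h).resolve_left ht2
  refine ⟨?_, htt, ?_⟩
  · subst h2 h3
    funext j
    rw [ha j, hb j, htt]
    ring
  · funext j
    have h1 := sub_eq_zero.mp (ha j)
    have h2' := sub_eq_zero.mp (hb j)
    rw [← h1, ← h2']
end

section
/- Let d ∈ ℝ and C, ρ > 0. Let f : [1, ∞) → ℂ be a function such that for every natural number N and every r ≥ 1, |f(r)| ≤ C · ρ^N · N! · r^{d − N}. Then there exist C' > 0 and c > 0 (depending only on C, ρ, d) such that |f(r)| ≤ C' · e^{−c r} for all r ≥ 1. -/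
/-!
Truncating the zero expansion at the optimal order `N ≈ r / (2ρ)` gives
`ρ^N N! r^{-N} ≤ (ρ N / r)^N ≤ 2^{-N}`, which is exponentially small in `r`; half of that
exponential decay absorbs the polynomial factor `r^d`.
-/

open Real
open scoped Nat

lemma pow_mul_factorial_le_pow {ρ s : ℝ} {N : ℕ} (hρ : 0 ≤ ρ) (h : ρ * N ≤ s) :
    ρ ^ N * N ! ≤ s ^ N :=
  calc ρ ^ N * N ! ≤ ρ ^ N * (N : ℝ) ^ N := by
        gcongr
        exact_mod_cast N.factorial_le_pow
    _ = (ρ * N) ^ N := (mul_pow ..).symm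
    _ ≤ s ^ N := by gcongr

lemma inv_two_pow_floor_le (x : ℝ) : (2⁻¹ : ℝ) ^ ⌊x⌋₊ ≤ 2 * exp (-(log 2 * x)) := by
  have hx : x < ⌊x⌋₊ + 1 := Nat.lt_floor_add_one x
  calc (2⁻¹ : ℝ) ^ ⌊x⌋₊ = exp (⌊x⌋₊ * -log 2) := by
        rw [exp_nat_mul, exp_neg, exp_log two_pos]
    _ ≤ exp (log 2 - log 2 * x) := by
        gcongr
        nlinarith [log_pos one_lt_two]
    _ = 2 * exp (-(log 2 * x)) := by
        rw [sub_eq_add_neg, exp_add, exp_log two_pos]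

lemma rpow_le_mul_exp {d b r : ℝ} (hb : 0 < b) (hr : 1 ≤ r) :
    r ^ d ≤ ⌈d⌉₊ ! / b ^ ⌈d⌉₊ * exp (b * r) := by
  set m := ⌈d⌉₊
  have hexp : (b * r) ^ m / m ! ≤ exp (b * r) := pow_div_factorial_le_exp _ (by positivity) m
  calc r ^ d ≤ r ^ (m : ℝ) := rpow_le_rpow_of_exponent_le hr (Nat.le_ceil d)
    _ = m ! / b ^ m * ((b * r) ^ m / m !) := by
        rw [rpow_natCast, mul_pow]
        field_simp
    _ ≤ m ! / b ^ m * exp (b * r) := by gcongr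

/-- Optimal truncation of the factorial remainder bound, at order `N = ⌊r / (2ρ)⌋`. -/
lemma exists_pow_mul_factorial_mul_rpow_le (d : ℝ) {ρ r : ℝ} (hρ : 0 < ρ) (hr : 0 < r) :
    ∃ N : ℕ, ρ ^ N * N ! * r ^ (d - N) ≤ 2 * exp (-(log 2 / (2 * ρ)) * r) * r ^ d := by
  set N := ⌊r / (2 * ρ)⌋₊
  refine ⟨N, ?_⟩
  have hN : ρ * N ≤ r / 2 := by
    have := Nat.floor_le (a := r / (2 * ρ)) (by positivity)
    calc ρ * N ≤ ρ * (r / (2 * ρ)) := by gcongr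
      _ = r / 2 := by field_simp
  have htrunc : ρ ^ N * N ! / r ^ N ≤ (2⁻¹ : ℝ) ^ N :=
    calc ρ ^ N * N ! / r ^ N ≤ (r / 2) ^ N / r ^ N := by
          gcongr
          exact pow_mul_factorial_le_pow hρ.le hN
      _ = (2⁻¹ : ℝ) ^ N := by
          rw [div_pow, div_div_cancel_left' (by positivity), inv_pow]
  have hdecay : (2⁻¹ : ℝ) ^ N ≤ 2 * exp (-(log 2 / (2 * ρ)) * r) := by
    convert inv_two_pow_floor_le (r / (2 * ρ)) using 3
    ring
  calc ρ ^ N * N ! * r ^ (d - N) = ρ ^ N * N ! / r ^ N * r ^ d := by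
        rw [rpow_sub hr, rpow_natCast]
        ring
    _ ≤ 2 * exp (-(log 2 / (2 * ρ)) * r) * r ^ d := by
        gcongr
        exact htrunc.trans hdecay

/-- **A function with vanishing formal analytic amplitude is exponentially small**: if
`|f(r)| ≤ C ρ^N N! r^{d−N}` for every order `N` and every `r ≥ 1`, then
`|f(r)| ≤ C' e^{−c r}` for some `C', c > 0` depending only on `C, ρ, d`. -/
theorem stmt_6 (d C ρ : ℝ) (hC : 0 < C) (hρ : 0 < ρ)
    (f : ℝ → ℂ)
    (hf : ∀ (N : ℕ) (r : ℝ), 1 ≤ r →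
      ‖f r‖ ≤ C * ρ ^ N * (N.factorial : ℝ) * r ^ (d - (N : ℝ))) :
    ∃ C' : ℝ, 0 < C' ∧ ∃ c : ℝ, 0 < c ∧
      ∀ r : ℝ, 1 ≤ r → ‖f r‖ ≤ C' * Real.exp (-c * r) := by
  set c := log 2 / (4 * ρ)
  have hc : 0 < c := div_pos (log_pos one_lt_two) (by positivity)
  refine ⟨C * 2 * (⌈d⌉₊ ! / c ^ ⌈d⌉₊), by positivity, c, hc, fun r hr => ?_⟩
  obtain ⟨N, hN⟩ := exists_pow_mul_factorial_mul_rpow_le d hρ (zero_lt_one.trans_le hr)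
  have hhalf : log 2 / (2 * ρ) = 2 * c := by
    simp only [c]
    field_simp
    ring
  have hbound : ρ ^ N * N ! * r ^ (d - N) ≤
      2 * exp (-(2 * c) * r) * (⌈d⌉₊ ! / c ^ ⌈d⌉₊ * exp (c * r)) := by
    refine hN.trans ?_
    rw [hhalf]
    gcongr
    exact rpow_le_mul_exp hc hr
  calc ‖f r‖ ≤ C * (ρ ^ N * N ! * r ^ (d - N)) := by
        simpa only [mul_assoc] using hf N r hr
    _ ≤ C * (2 * exp (-(2 * c) * r) * (⌈d⌉₊ ! / c ^ ⌈d⌉₊ * exp (c * r))) := by gcongr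
    _ = C * 2 * (⌈d⌉₊ ! / c ^ ⌈d⌉₊) * exp (-c * r) := by
        rw [show -c * r = -(2 * c) * r + c * r by ring, exp_add]
        ring
end

section
/- Let d ∈ ℝ and C, R > 0, and let (a_ℓ)_{ℓ∈ℕ} be a sequence of functions a_ℓ : [1, ∞) → ℂ with |a_ℓ(r)| ≤ C · R^ℓ · ℓ! · r^{d − ℓ} for all ℓ ∈ ℕ and r ≥ 1. Let c be a real number with 0 < c ≤ 1/(4R), and define A(r) = Σ_{ℓ=0}^{⌊cr⌋} a_ℓ(r) for r ≥ 1. Then there exist C' > 0 and R' > 0 (depending only on C, R, c, d) such that for every natural number N and every r ≥ 1: |A(r) − Σ_{ℓ=0}^{N−1} a_ℓ(r)| ≤ C' · (R')^N · N! · r^{d − N}. -/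
/-
Write `B_ℓ(r) = C R^ℓ ℓ! r^{d-ℓ}`. For `ℓ = N + k ≤ c r` one has
`B_ℓ / B_N ≤ (R (N + k) / r)^k ≤ (R c)^k ≤ 4^{-k}`, so the terms of `A` beyond the `N`-th sum to at
most `(4/3) B_N`. For `c r < ℓ < N` one has `r < ℓ / c`, hence `r^{N-ℓ} ≤ (ℓ / c)^{N-ℓ}`; with
`R ≤ 1 / c` and `ℓ! ℓ^{N-ℓ} ≤ N!` each of the fewer than `2^N` missing terms is at most
`C c^{-N} N! r^{d-N}`.
-/

open Finset Real
open scoped Nat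

theorem Nat.factorial_add_le_factorial_mul_pow (n k : ℕ) : (n + k)! ≤ n ! * (n + k) ^ k := by
  have h := Nat.factorial_mul_descFactorial (Nat.le_add_left k n)
  rw [Nat.add_sub_cancel] at h
  exact h ▸ Nat.mul_le_mul_left _ (Nat.descFactorial_le_pow _ _)

theorem Real.rpow_sub_natCast_add {r : ℝ} (hr : 0 < r) (d : ℝ) (m k : ℕ) :
    r ^ (d - ((m + k : ℕ) : ℝ)) = r ^ (d - m) / r ^ k := by
  rw [Nat.cast_add, ← sub_sub, rpow_sub_natCast hr.ne']

theorem norm_sum_Ico_le_of_le_geometric {E : Type*} [SeminormedAddCommGroup E] {f : ℕ → E}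
    {q B : ℝ} (hq₀ : 0 ≤ q) (hq₁ : q < 1) (hB : 0 ≤ B) {m n : ℕ}
    (hf : ∀ k, m + k < n → ‖f (m + k)‖ ≤ q ^ k * B) :
    ‖∑ i ∈ Ico m n, f i‖ ≤ B / (1 - q) := by
  rcases le_or_gt m n with hmn | hmn
  · rw [sum_Ico_eq_sum_range]
    calc ‖∑ k ∈ range (n - m), f (m + k)‖
        ≤ ∑ k ∈ range (n - m), q ^ k * B :=
          norm_sum_le_of_le _ fun k hk => hf k (by rw [mem_range] at hk; omega)
      _ = (∑ k ∈ Ico 0 (n - m), q ^ k) * B := by rw [range_eq_Ico, sum_mul]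
      _ ≤ q ^ 0 / (1 - q) * B := by gcongr; exact geom_sum_Ico_le_of_lt_one hq₀ hq₁
      _ = B / (1 - q) := by ring
  · rw [Ico_eq_empty_of_le hmn.le, sum_empty, norm_zero]
    exact div_nonneg hB (by linarith)

noncomputable def gevreyBound (C R d : ℝ) (ℓ : ℕ) (r : ℝ) : ℝ := C * R ^ ℓ * ℓ ! * r ^ (d - ℓ)

section

variable {C R d r : ℝ}

theorem gevreyBound_mono {C' R' : ℝ} (hC : 0 ≤ C) (hCC' : C ≤ C') (hR : 0 ≤ R) (hRR' : R ≤ R')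
    (hr : 0 < r) (n : ℕ) : gevreyBound C R d n r ≤ gevreyBound C' R' d n r := by
  have : 0 ≤ C' := hC.trans hCC'
  unfold gevreyBound
  gcongr

theorem gevreyBound_add_le_geometric {c : ℝ} (hC : 0 ≤ C) (hR : 0 ≤ R) (hr : 0 < r)
    (hRc : R * c ≤ 1 / 4) {m k : ℕ} (hmk : ((m + k : ℕ) : ℝ) ≤ c * r) :
    gevreyBound C R d (m + k) r ≤ (1 / 4) ^ k * gevreyBound C R d m r := by
  have hfact : R ^ k * ((m + k)! : ℝ) ≤ m ! * (r / 4) ^ k := calc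
    R ^ k * ((m + k)! : ℝ) ≤ R ^ k * (m ! * ((m + k : ℕ) : ℝ) ^ k) := by
        gcongr; exact_mod_cast Nat.factorial_add_le_factorial_mul_pow m k
    _ = m ! * (R * (m + k : ℕ)) ^ k := by ring
    _ ≤ m ! * (r / 4) ^ k := by
        gcongr
        nlinarith
  calc gevreyBound C R d (m + k) r
      = C * R ^ m * r ^ (d - m) * (R ^ k * (m + k)! / r ^ k) := by
        rw [gevreyBound, Real.rpow_sub_natCast_add hr, pow_add]; ring
    _ ≤ C * R ^ m * r ^ (d - m) * (m ! * (r / 4) ^ k / r ^ k) := by gcongr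
    _ = (1 / 4) ^ k * gevreyBound C R d m r := by
        rw [gevreyBound, div_pow, one_div_pow]; field_simp

theorem gevreyBound_le_of_lt {c : ℝ} (hC : 0 ≤ C) (hR : 0 ≤ R) (hc : 0 < c) (hr : 0 < r)
    (hRc : R ≤ c⁻¹) {m n : ℕ} (hmn : m ≤ n) (hm : c * r < m) :
    gevreyBound C R d m r ≤ gevreyBound C c⁻¹ d n r := by
  obtain ⟨k, rfl⟩ := Nat.exists_eq_add_of_le hmn
  have hrm : r ≤ m * c⁻¹ := by rw [← div_eq_mul_inv, le_div_iff₀ hc]; linarith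
  have hfact : (m ! : ℝ) * m ^ k ≤ (m + k)! := by
    have h := Nat.factorial_mul_pow_sub_le_factorial hmn
    rw [Nat.add_sub_cancel_left] at h
    exact_mod_cast h
  calc gevreyBound C R d m r
      = C * R ^ m * r ^ (d - (m + k : ℕ)) * (m ! * r ^ k) := by
        rw [gevreyBound, Real.rpow_sub_natCast_add hr]; field_simp
    _ ≤ C * c⁻¹ ^ m * r ^ (d - (m + k : ℕ)) * (m ! * (m * c⁻¹) ^ k) := by gcongr
    _ = C * c⁻¹ ^ (m + k) * (m ! * m ^ k) * r ^ (d - (m + k : ℕ)) := by ring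
    _ ≤ gevreyBound C c⁻¹ d (m + k) r := by rw [gevreyBound]; gcongr

theorem gevreyBound_nonneg (hC : 0 ≤ C) (hR : 0 ≤ R) (hr : 0 ≤ r) (n : ℕ) :
    0 ≤ gevreyBound C R d n r := by
  unfold gevreyBound; positivity

theorem mul_gevreyBound (t : ℝ) (n : ℕ) :
    t * gevreyBound C R d n r = gevreyBound (t * C) R d n r := by
  unfold gevreyBound; ring

theorem pow_mul_gevreyBound (t : ℝ) (n : ℕ) :
    t ^ n * gevreyBound C R d n r = gevreyBound C (t * R) d n r := by
  unfold gevreyBound; ring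

theorem norm_sum_Ico_floor_le {E : Type*} [SeminormedAddCommGroup E] {a : ℕ → E} {c : ℝ}
    (hC : 0 ≤ C) (hR : 0 ≤ R) (hc : 0 ≤ c) (hr : 0 < r) (hRc : R * c ≤ 1 / 4)
    (ha : ∀ ℓ, ‖a ℓ‖ ≤ gevreyBound C R d ℓ r) (N : ℕ) :
    ‖∑ ℓ ∈ Ico N (⌊c * r⌋₊ + 1), a ℓ‖ ≤ gevreyBound (2 * C) R d N r := by
  have hgeom : ∀ k, N + k < ⌊c * r⌋₊ + 1 → ‖a (N + k)‖ ≤ (1 / 4) ^ k * gevreyBound C R d N r :=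
    fun k hk => (ha _).trans <| gevreyBound_add_le_geometric hC hR hr hRc <|
      (Nat.le_floor_iff (by positivity)).1 (Nat.lt_succ_iff.1 hk)
  have hB := gevreyBound_nonneg (d := d) hC hR hr.le N
  calc _ ≤ gevreyBound C R d N r / (1 - 1 / 4) :=
        norm_sum_Ico_le_of_le_geometric (by norm_num) (by norm_num) hB hgeom
    _ ≤ 2 * gevreyBound C R d N r := by norm_num; linarith
    _ = gevreyBound (2 * C) R d N r := mul_gevreyBound 2 N

theorem norm_sum_floor_Ico_le {E : Type*} [SeminormedAddCommGroup E] {a : ℕ → E} {c : ℝ}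
    (hC : 0 ≤ C) (hR : 0 ≤ R) (hc : 0 < c) (hr : 0 < r) (hRc : R ≤ c⁻¹)
    (ha : ∀ ℓ, ‖a ℓ‖ ≤ gevreyBound C R d ℓ r) (N : ℕ) :
    ‖∑ ℓ ∈ Ico (⌊c * r⌋₊ + 1) N, a ℓ‖ ≤ gevreyBound C (2 * c⁻¹) d N r := calc
  _ ≤ ∑ ℓ ∈ Ico (⌊c * r⌋₊ + 1) N, gevreyBound C c⁻¹ d N r :=
      norm_sum_le_of_le _ fun ℓ hℓ => (ha ℓ).trans <|
        gevreyBound_le_of_lt hC hR hc hr hRc (mem_Ico.1 hℓ).2.le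
          (Nat.lt_of_floor_lt (mem_Ico.1 hℓ).1)
  _ = (N - (⌊c * r⌋₊ + 1) : ℕ) * gevreyBound C c⁻¹ d N r := by
      rw [sum_const, Nat.card_Ico, nsmul_eq_mul]
  _ ≤ 2 ^ N * gevreyBound C c⁻¹ d N r := by
      gcongr
      · exact gevreyBound_nonneg hC (by positivity) hr.le N
      · exact_mod_cast (Nat.sub_le _ _).trans N.lt_two_pow_self.le
  _ = gevreyBound C (2 * c⁻¹) d N r := pow_mul_gevreyBound 2 N

end

/-- **Borel summation of a formal analytic amplitude by lowest-term truncation**: if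
`|a_ℓ(r)| ≤ C R^ℓ ℓ! r^{d−ℓ}` and `0 < c ≤ 1/(4R)`, then `A(r) = Σ_{ℓ≤⌊cr⌋} a_ℓ(r)`
realises the formal amplitude `(a_ℓ)`, i.e. for some `C', R' > 0` one has
`|A(r) − Σ_{ℓ<N} a_ℓ(r)| ≤ C' R'^N N! r^{d−N}` for every `N` and `r ≥ 1`. -/
theorem stmt_7 (d C R : ℝ) (hC : 0 < C) (hR : 0 < R)
    (a : ℕ → ℝ → ℂ)
    (ha : ∀ (ℓ : ℕ) (r : ℝ), 1 ≤ r →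
      ‖a ℓ r‖ ≤ C * R ^ ℓ * (ℓ.factorial : ℝ) * r ^ (d - (ℓ : ℝ)))
    (c : ℝ) (hc : 0 < c) (hcR : c ≤ 1 / (4 * R))
    (A : ℝ → ℂ)
    (hA : ∀ r : ℝ, 1 ≤ r → A r = ∑ ℓ ∈ Finset.range (⌊c * r⌋₊ + 1), a ℓ r) :
    ∃ C' : ℝ, 0 < C' ∧ ∃ R' : ℝ, 0 < R' ∧
      ∀ (N : ℕ) (r : ℝ), 1 ≤ r →
        ‖A r - ∑ ℓ ∈ Finset.range N, a ℓ r‖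
          ≤ C' * R' ^ N * (N.factorial : ℝ) * r ^ (d - (N : ℝ)) := by
  have hRc : R * c ≤ 1 / 4 := by
    have := (le_div_iff₀ (by positivity)).1 hcR
    linarith
  have hRc' : R ≤ c⁻¹ := by rw [← one_div, le_div_iff₀ hc]; linarith
  refine ⟨2 * C, by positivity, max R (2 * c⁻¹), by positivity, fun N r hr => ?_⟩
  have hr₀ : 0 < r := by linarith
  have ha' : ∀ ℓ, ‖a ℓ r‖ ≤ gevreyBound C R d ℓ r := fun ℓ => ha ℓ r hr
  rw [hA r hr]
  change _ ≤ gevreyBound (2 * C) (max R (2 * c⁻¹)) d N r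
  rcases le_or_gt N (⌊c * r⌋₊ + 1) with hN | hN
  · rw [← sum_Ico_eq_sub _ hN]
    exact (norm_sum_Ico_floor_le hC.le hR.le hc.le hr₀ hRc ha' N).trans <|
      gevreyBound_mono (by positivity) le_rfl hR.le (le_max_left _ _) hr₀ N
  · rw [← neg_sub, norm_neg, ← sum_Ico_eq_sub _ hN.le]
    exact (norm_sum_floor_Ico_le hC.le hR.le hc hr₀ hRc' ha' N).trans <|
      gevreyBound_mono hC.le (by linarith) (by positivity) (le_max_right _ _) hr₀ N
end

section
/- Let d_a, d_b ∈ ℝ and C, ρ > 0. Let (a_j)_{j∈ℕ}, (b_j)_{j∈ℕ} be sequences of functions from [1, ∞) to ℂ and a, b : [1, ∞) → ℂ be functions such that for all j ∈ ℕ and r ≥ 1: |a_j(r)| ≤ C ρ^j j! r^{d_a − j} and |b_j(r)| ≤ C ρ^j j! r^{d_b − j}, and for every natural number N and r ≥ 1: |a(r) − Σ_{j<N} a_j(r)| ≤ C ρ^N N! r^{d_a − N} and |b(r) − Σ_{j<N} b_j(r)| ≤ C ρ^N N! r^{d_b − N}. Then there exist C' > 0 and ρ' > 0 (depending only on C, ρ,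 d_a, d_b) such that for every natural number N and every r ≥ 1: |a(r) · b(r) − Σ_{k<N} Σ_{j=0}^{k} a_j(r) b_{k−j}(r)| ≤ C' (ρ')^N N! r^{d_a + d_b − N}. -/
/-!
Write `S_N f = ∑_{j<N} f_j`. The Cauchy product truncated at order `N` is
`∑_{j<N} a_j S_{N-j} b`, so
`ab - ∑_{k<N} (a⋆b)_k = (a - S_N a) b + ∑_{j<N} a_j (b - S_{N-j} b)`.
Each of these `N + 1` terms is a product of two factorial bounds of total order `N`, hence at
most `C² ρ^N j! (N-j)! r^(d_a+d_b-N) ≤ C² ρ^N N! r^(d_a+d_b-N)`, and the factor `N + 1 ≤ 2·2^N`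
is absorbed into `C' = 2C²`, `ρ' = 2ρ`.
-/

open Finset

section CauchyProduct

variable {R : Type*}

lemma mul_sub_sum_range_cauchy_eq [CommRing R] (x y : R) (f g : ℕ → R) (N : ℕ) :
    x * y - ∑ k ∈ range N, ∑ j ∈ range (k + 1), f j * g (k - j)
      = (x - ∑ j ∈ range N, f j) * y + ∑ j ∈ range N, f j * (y - ∑ l ∈ range (N - j), g l) := by
  rw [sum_range_diag_flip N fun j l ↦ f j * g l]
  simp only [mul_sub, sub_mul, sum_sub_distrib, ← mul_sum, ← sum_mul]
  ring

lemma norm_mul_sub_sum_range_cauchy_le [SeminormedCommRing R] (x y : R) (f g : ℕ → R) (N : ℕ)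
    {M : ℝ} (hx : ‖x - ∑ j ∈ range N, f j‖ * ‖y‖ ≤ M)
    (hy : ∀ j < N, ‖f j‖ * ‖y - ∑ l ∈ range (N - j), g l‖ ≤ M) :
    ‖x * y - ∑ k ∈ range N, ∑ j ∈ range (k + 1), f j * g (k - j)‖ ≤ (N + 1) * M := by
  rw [mul_sub_sum_range_cauchy_eq]
  have hsum : ‖∑ j ∈ range N, f j * (y - ∑ l ∈ range (N - j), g l)‖ ≤ N * M :=
    calc _ ≤ ∑ j ∈ range N, ‖f j‖ * ‖y - ∑ l ∈ range (N - j), g l‖ :=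
          norm_sum_le_of_le _ fun j _ ↦ norm_mul_le _ _
      _ ≤ ∑ _j ∈ range N, M := sum_le_sum fun j hj ↦ hy j (mem_range.mp hj)
      _ = N * M := by rw [sum_const, card_range, nsmul_eq_mul]
  calc _ ≤ ‖(x - ∑ j ∈ range N, f j) * y‖ + ‖∑ j ∈ range N, f j * (y - ∑ l ∈ range (N - j), g l)‖ :=
        norm_add_le _ _
    _ ≤ M + N * M := add_le_add ((norm_mul_le _ _).trans hx) hsum
    _ = (N + 1) * M := by ring

end CauchyProduct

section FactorialBound

noncomputable def factorialBound (C ρ d : ℝ) (N : ℕ) (r : ℝ) : ℝ :=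
  C * ρ ^ N * N.factorial * r ^ (d - N)

variable {C C₁ C₂ ρ d d₁ d₂ r : ℝ}

lemma factorialBound_mul_le (hC : 0 ≤ C₁ * C₂) (hρ : 0 ≤ ρ) (hr : 0 < r) {j N : ℕ}
    (hjN : j ≤ N) :
    factorialBound C₁ ρ d₁ j r * factorialBound C₂ ρ d₂ (N - j) r
      ≤ factorialBound (C₁ * C₂) ρ (d₁ + d₂) N r := by
  have hfac : (j.factorial * (N - j).factorial : ℝ) ≤ N.factorial := by
    exact_mod_cast Nat.le_of_dvd N.factorial_pos (Nat.factorial_mul_factorial_dvd_factorial hjN)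
  have hρpow : ρ ^ j * ρ ^ (N - j) = ρ ^ N := by rw [← pow_add, Nat.add_sub_cancel' hjN]
  have hrpow : r ^ (d₁ - j) * r ^ (d₂ - ↑(N - j)) = r ^ (d₁ + d₂ - N) := by
    rw [← Real.rpow_add hr, Nat.cast_sub hjN]; ring_nf
  calc _ = C₁ * C₂ * (ρ ^ j * ρ ^ (N - j)) * (j.factorial * (N - j).factorial : ℝ)
          * (r ^ (d₁ - j) * r ^ (d₂ - ↑(N - j))) := by unfold factorialBound; ring
    _ = C₁ * C₂ * ρ ^ N * (j.factorial * (N - j).factorial : ℝ) * r ^ (d₁ + d₂ - N) := by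
        rw [hρpow, hrpow]
    _ ≤ _ := by unfold factorialBound; gcongr

lemma succ_mul_factorialBound_le (hC : 0 ≤ C) (hρ : 0 ≤ ρ) (hr : 0 ≤ r) (N : ℕ) :
    (N + 1) * factorialBound C ρ d N r ≤ factorialBound (2 * C) (2 * ρ) d N r := by
  have hN : (N + 1 : ℝ) ≤ 2 * 2 ^ N := by
    have : (N : ℝ) < 2 ^ N := by exact_mod_cast N.lt_two_pow_self
    linarith [one_le_pow₀ (M₀ := ℝ) (n := N) one_le_two]
  calc _ ≤ 2 * 2 ^ N * factorialBound C ρ d N r := by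
        unfold factorialBound; gcongr
    _ = _ := by unfold factorialBound; rw [mul_pow]; ring

end FactorialBound

theorem stmt_8_general (da db C ρ : ℝ) (hC : 0 < C) (hρ : 0 < ρ)
    (A B : ℕ → ℝ → ℂ) (a b : ℝ → ℂ)
    (hA : ∀ (j : ℕ) (r : ℝ), 1 ≤ r →
      ‖A j r‖ ≤ C * ρ ^ j * (j.factorial : ℝ) * r ^ (da - (j : ℝ)))
    (ha : ∀ (N : ℕ) (r : ℝ), 1 ≤ r →
      ‖a r - ∑ j ∈ Finset.range N, A j r‖ ≤ C * ρ ^ N * (N.factorial : ℝ) * r ^ (da - (N : ℝ)))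
    (hb : ∀ (N : ℕ) (r : ℝ), 1 ≤ r →
      ‖b r - ∑ j ∈ Finset.range N, B j r‖ ≤ C * ρ ^ N * (N.factorial : ℝ) * r ^ (db - (N : ℝ))) :
    ∃ C' : ℝ, 0 < C' ∧ ∃ ρ' : ℝ, 0 < ρ' ∧
      ∀ (N : ℕ) (r : ℝ), 1 ≤ r →
        ‖a r * b r - ∑ k ∈ Finset.range N, ∑ j ∈ Finset.range (k + 1), A j r * B (k - j) r‖
          ≤ C' * ρ' ^ N * (N.factorial : ℝ) * r ^ (da + db - (N : ℝ)) := by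
  refine ⟨2 * (C * C), by positivity, 2 * ρ, by positivity, fun N r hr ↦ ?_⟩
  have hr0 : 0 < r := one_pos.trans_le hr
  have hCC : 0 ≤ C * C := by positivity
  have hb_norm : ‖b r‖ ≤ factorialBound C ρ db 0 r := by simpa [factorialBound] using hb 0 r hr
  have hrem : ‖a r - ∑ j ∈ range N, A j r‖ * ‖b r‖ ≤ factorialBound (C * C) ρ (da + db) N r := by
    have := factorialBound_mul_le (d₁ := da) (d₂ := db) hCC hρ.le hr0 (le_refl N)
    rw [Nat.sub_self] at this
    exact (mul_le_mul (ha N r hr) hb_norm (norm_nonneg _) (by positivity)).trans this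
  have hterm (j : ℕ) (hj : j < N) :
      ‖A j r‖ * ‖b r - ∑ l ∈ range (N - j), B l r‖ ≤ factorialBound (C * C) ρ (da + db) N r :=
    (mul_le_mul (hA j r hr) (hb (N - j) r hr) (norm_nonneg _) (by positivity)).trans
      (factorialBound_mul_le hCC hρ.le hr0 hj.le)
  exact (norm_mul_sub_sum_range_cauchy_le (a r) (b r) (A · r) (B · r) N hrem hterm).trans
    (succ_mul_factorialBound_le hCC hρ.le hr0.le N)

/-- **Products of realisations realise the Cauchy product**: if `a` and `b` realise the
formal analytic amplitudes `(a_j)` and `(b_j)` of degrees `d_a` and `d_b` with factorial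
remainder control, then `a·b` realises the Cauchy product `(Σ_{j≤k} a_j b_{k−j})_k`, with
factorial remainder control at every order. -/
theorem stmt_8 (da db C ρ : ℝ) (hC : 0 < C) (hρ : 0 < ρ)
    (A B : ℕ → ℝ → ℂ) (a b : ℝ → ℂ)
    (hA : ∀ (j : ℕ) (r : ℝ), 1 ≤ r →
      ‖A j r‖ ≤ C * ρ ^ j * (j.factorial : ℝ) * r ^ (da - (j : ℝ)))
    (hB : ∀ (j : ℕ) (r : ℝ), 1 ≤ r →
      ‖B j r‖ ≤ C * ρ ^ j * (j.factorial : ℝ) * r ^ (db - (j : ℝ)))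
    (ha : ∀ (N : ℕ) (r : ℝ), 1 ≤ r →
      ‖a r - ∑ j ∈ Finset.range N, A j r‖ ≤ C * ρ ^ N * (N.factorial : ℝ) * r ^ (da - (N : ℝ)))
    (hb : ∀ (N : ℕ) (r : ℝ), 1 ≤ r →
      ‖b r - ∑ j ∈ Finset.range N, B j r‖ ≤ C * ρ ^ N * (N.factorial : ℝ) * r ^ (db - (N : ℝ))) :
    ∃ C' : ℝ, 0 < C' ∧ ∃ ρ' : ℝ, 0 < ρ' ∧
      ∀ (N : ℕ) (r : ℝ), 1 ≤ r →
        ‖a r * b r - ∑ k ∈ Finset.range N, ∑ j ∈ Finset.range (k + 1), A j r * B (k - j) r‖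
          ≤ C' * ρ' ^ N * (N.factorial : ℝ) * r ^ (da + db - (N : ℝ)) :=
  stmt_8_general da db C ρ hC hρ A B a b hA ha hb
end

section
/- Let n ≥ 1 and let K ⊆ ℝ^n be compact, regarded as a subset of ℂ^n via the standard embedding. Let U ⊆ ℂ^n be open with K ⊆ U, let f : U → ℂ be holomorphic, and let ε > 0. Then there exist an open set V ⊆ ℂ^n with K ⊆ V ⊆ U and an entire function g : ℂ^n → ℂ such that |f(z) − g(z)| ≤ ε for all z ∈ V. -/
/-!
On a set of points with real coordinates, complex conjugation fixes the coordinate functions,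
so on a compact such set `L` the complex polynomials form a point-separating star subalgebra
of `C(L, ℂ)`, which is dense by the Stone–Weierstrass theorem. A polynomial `p` uniformly
within `ε` of `f` on `L` is entire, and `‖f - p‖ < ε` persists on an open neighbourhood of `L`
inside `U` by continuity.
-/

namespace MvPolynomial

variable {ι : Type*} (L : Set (ι → ℂ))

noncomputable def toContinuousMapOnAlgHom : MvPolynomial ι ℂ →ₐ[ℂ] C(L, ℂ) :=
  aeval fun j => (ContinuousMap.eval j).restrict L

theorem toContinuousMapOnAlgHom_apply (p : MvPolynomial ι ℂ) (z : L) :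
    toContinuousMapOnAlgHom L p z = eval (z : ι → ℂ) p := by
  rw [← ContinuousMap.evalAlgHom_apply (S := ℂ), ← AlgHom.comp_apply, toContinuousMapOnAlgHom,
    comp_aeval]
  exact congrFun (aeval_eq_eval (z : ι → ℂ)) p

variable {L}

theorem dense_range_toContinuousMapOnAlgHom [CompactSpace L]
    (hreal : ∀ z ∈ L, ∀ j, star (z j) = z j) :
    Dense (Set.range (toContinuousMapOnAlgHom L)) := by
  set c : ι → C(L, ℂ) := fun j => (ContinuousMap.eval j).restrict L
  have hstar : star (Set.range c) = Set.range c := by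
    have hc : ∀ j, star (c j) = c j := fun j => ContinuousMap.ext fun z => hreal z z.2 j
    ext g
    simp only [Set.mem_star, Set.mem_range]
    constructor
    · rintro ⟨j, hj⟩
      exact ⟨j, by rw [← star_star g, ← hj, hc]⟩
    · rintro ⟨j, rfl⟩
      exact ⟨j, (hc j).symm⟩
  have hsep : (StarAlgebra.adjoin ℂ (Set.range c)).SeparatesPoints := by
    intro z w hzw
    obtain ⟨j, hj⟩ : ∃ j, (z : ι → ℂ) j ≠ (w : ι → ℂ) j := by
      by_contra! h
      exact hzw (Subtype.ext (_root_.funext h))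
    exact ⟨c j, ⟨c j, StarAlgebra.subset_adjoin ℂ _ ⟨j, rfl⟩, rfl⟩, hj⟩
  have hrange : (StarAlgebra.adjoin ℂ (Set.range c) : Set C(L, ℂ)) =
      Set.range (toContinuousMapOnAlgHom L) := by
    rw [← StarSubalgebra.coe_toSubalgebra, StarAlgebra.adjoin_toSubalgebra, hstar,
      Set.union_self, Algebra.adjoin_range_eq_range_aeval, AlgHom.coe_range]
    rfl
  rw [dense_iff_closure_eq, ← hrange, ← StarSubalgebra.topologicalClosure_coe,
    ContinuousMap.starSubalgebra_topologicalClosure_eq_top_of_separatesPoints _ hsep]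
  rfl

theorem exists_norm_sub_eval_lt (hL : IsCompact L) (hreal : ∀ z ∈ L, ∀ j, star (z j) = z j)
    {f : (ι → ℂ) → ℂ} (hf : ContinuousOn f L) {ε : ℝ} (hε : 0 < ε) :
    ∃ p : MvPolynomial ι ℂ, ∀ z ∈ L, ‖f z - eval z p‖ < ε := by
  have := isCompact_iff_compactSpace.mp hL
  obtain ⟨_, ⟨p, rfl⟩, hp⟩ :=
    (dense_range_toContinuousMapOnAlgHom hreal).exists_dist_lt
      ⟨L.domRestrict f, hf.domRestrict⟩ hε
  refine ⟨p, fun z hz => ?_⟩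
  rw [← dist_eq_norm, ← toContinuousMapOnAlgHom_apply L p ⟨z, hz⟩]
  exact (ContinuousMap.dist_apply_le_dist ⟨z, hz⟩).trans_lt hp

end MvPolynomial

theorem stmt_16_general (n : ℕ)
    (K : Set (Fin n → ℝ)) (hK : IsCompact K)
    (e : (Fin n → ℝ) → (Fin n → ℂ)) (he : ∀ x j, e x j = (x j : ℂ))
    (U : Set (Fin n → ℂ)) (hU : IsOpen U) (hKU : e '' K ⊆ U)
    (f : (Fin n → ℂ) → ℂ) (hf : DifferentiableOn ℂ f U)
    (ε : ℝ) (hε : 0 < ε) :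
    ∃ V : Set (Fin n → ℂ), IsOpen V ∧ e '' K ⊆ V ∧ V ⊆ U ∧
      ∃ g : (Fin n → ℂ) → ℂ, Differentiable ℂ g ∧
        ∀ z ∈ V, ‖f z - g z‖ ≤ ε := by
  have he_cont : Continuous e := continuous_pi fun j => by simp only [he]; fun_prop
  have hreal : ∀ z ∈ e '' K, ∀ j, star (z j) = z j := by
    rintro _ ⟨x, -, rfl⟩ j
    rw [he]
    exact Complex.conj_ofReal (x j)
  obtain ⟨p, hp⟩ := MvPolynomial.exists_norm_sub_eval_lt (hK.image he_cont) hreal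
    (hf.continuousOn.mono hKU) hε
  set g : (Fin n → ℂ) → ℂ := fun z => MvPolynomial.eval z p
  have hV : IsOpen (U ∩ (fun z => ‖f z - g z‖) ⁻¹' Set.Iio ε) :=
    (hf.continuousOn.sub (MvPolynomial.continuous_eval p).continuousOn).norm.isOpen_inter_preimage
      hU isOpen_Iio
  exact ⟨_, hV, fun z hz => ⟨hKU hz, hp z hz⟩, Set.inter_subset_left, g,
    fun z => (AnalyticOnNhd.eval_mvPolynomial p z trivial).differentiableAt, fun z hz => hz.2.le⟩

/-- **The Runge property of real compacts in `ℂ^n`**: if `K ⊆ ℝ^n` is compact (viewed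
inside `ℂ^n`) and `f` is holomorphic on an open neighbourhood `U` of `K` in `ℂ^n`, then
for every `ε > 0` there are an open set `V` with `K ⊆ V ⊆ U` and an entire function `g`
with `|f − g| ≤ ε` on `V`. -/
theorem stmt_16 (n : ℕ) (hn : 1 ≤ n)
    (K : Set (Fin n → ℝ)) (hK : IsCompact K)
    (e : (Fin n → ℝ) → (Fin n → ℂ)) (he : ∀ x j, e x j = (x j : ℂ))
    (U : Set (Fin n → ℂ)) (hU : IsOpen U) (hKU : e '' K ⊆ U)
    (f : (Fin n → ℂ) → ℂ) (hf : DifferentiableOn ℂ f U)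
    (ε : ℝ) (hε : 0 < ε) :
    ∃ V : Set (Fin n → ℂ), IsOpen V ∧ e '' K ⊆ V ∧ V ⊆ U ∧
      ∃ g : (Fin n → ℂ) → ℂ, Differentiable ℂ g ∧
        ∀ z ∈ V, ‖f z - g z‖ ≤ ε :=
  stmt_16_general n K hK e he U hU hKU f hf ε hε
end

section
/- Let n ≥ 2, let U ⊆ ℝ^{2n} be open with coordinates (x, y) ∈ ℝ^n × ℝ^n, and let ρ : U → ℂ be twice continuously differentiable. Define q_j = ∂_{x_j}ρ + i ∂_{y_j}ρ for 1 ≤ j ≤ n, and assume q_n(x,y) ≠ 0 for all (x,y) ∈ U. On the phase space U × ℝ^{2n} with cotangent coordinates (ξ, η) ∈ ℝ^n × ℝ^n, define for 1 ≤ j ≤ n−1 the functions p_j(x,y,ξ,η) = (ξ_j + i η_j) − (q_j(x,y)/q_n(x,y)) · (ξ_n + i η_n), and define the Poisson bracket {f, g} = Σ_{j=1}^{n} (∂_{ξ_j} f · ∂_{x_j} g − ∂_{x_j} f · ∂_{ξ_j} g) + Σ_{j=1}^{n} (∂_{η_j} f · ∂_{y_j} g − ∂_{y_j} f · ∂_{η_j}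 g). Then {p_j, p_k} = 0 identically on U × ℝ^{2n} for all 1 ≤ j, k ≤ n−1. -/
/-!
Write `ζ_l = ξ_l + iη_l`, `D_l = ∂_{x_l} + i∂_{y_l}` and `a_l = q_l / q_n`, so that
`p_j = ζ_j - a_j ζ_n`. Since `p_j` is affine in the fibre variables, `∂_ξ p_j` and `∂_η p_j`
only see `ζ_j - a_j ζ_n`, and contracting them against the base derivatives turns the bracket
into
`{p_j, p_k} = -ζ_n (L_j a_k - L_k a_j)` with the tangential Cauchy–Riemann fields
`L_j = D_j - a_j D_n`. Expanding `L_j a_k - L_k a_j` by the quotient rule leaves only terms that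
cancel in pairs once `D_j q_k = D_k q_j`, i.e. once `D_j D_k ρ = D_k D_j ρ`, which is the symmetry
of the second derivative of the `C²` function `ρ`.
-/

/-- Directional derivative of a complex-valued function in the direction `v`. -/
noncomputable def dd {E : Type*} [NormedAddCommGroup E] [NormedSpace ℝ E]
    (v : E) (f : E → ℂ) (p : E) : ℂ :=
  fderiv ℝ f p v

/-- The phase space `U × ℝ^{2n}` with coordinates `((x, y), (ξ, η))`. -/
abbrev Phase (n : ℕ) :=
  ((Fin n → ℝ) × (Fin n → ℝ)) × ((Fin n → ℝ) × (Fin n → ℝ))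

open Complex

namespace CRSymbol

lemma hasFDerivAt_div {E : Type*} [NormedAddCommGroup E] [NormedSpace ℝ E] {f g : E → ℂ}
    {f' g' : E →L[ℝ] ℂ} {z : E} (hf : HasFDerivAt f f' z) (hg : HasFDerivAt g g' z)
    (hgz : g z ≠ 0) :
    HasFDerivAt (fun y => f y / g y) ((g z)⁻¹ • f' - (f z / g z ^ 2) • g') z := by
  simp_rw [div_eq_mul_inv]
  refine (hf.mul ((hasDerivAt_inv hgz).comp_hasFDerivAt z hg)).congr_fderiv ?_
  refine ContinuousLinearMap.ext fun v => ?_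
  simp only [add_apply, smul_apply, sub_apply, Function.comp_apply, smul_eq_mul]
  ring

variable {n : ℕ}

noncomputable def dbar (l : Fin n) (f : (Fin n → ℝ) × (Fin n → ℝ) → ℂ)
    (z : (Fin n → ℝ) × (Fin n → ℝ)) : ℂ :=
  fderiv ℝ f z (Pi.single l 1, 0) + I * fderiv ℝ f z (0, Pi.single l 1)

section dbar

variable {f g : (Fin n → ℝ) × (Fin n → ℝ) → ℂ} {z : (Fin n → ℝ) × (Fin n → ℝ)}

lemma dbar_eq_of_hasFDerivAt {f' : (Fin n → ℝ) × (Fin n → ℝ) →L[ℝ] ℂ}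
    (hf : HasFDerivAt f f' z) (l : Fin n) :
    dbar l f z = f' (Pi.single l 1, 0) + I * f' (0, Pi.single l 1) := by
  rw [dbar, hf.fderiv]

lemma hasFDerivAt_dbar
    {H : (Fin n → ℝ) × (Fin n → ℝ) →L[ℝ] (Fin n → ℝ) × (Fin n → ℝ) →L[ℝ] ℂ}
    (hf : HasFDerivAt (fderiv ℝ f) H z) (l : Fin n) :
    HasFDerivAt (dbar l f)
      ((ContinuousLinearMap.apply ℝ ℂ (Pi.single l 1, 0)).comp H
        + I • (ContinuousLinearMap.apply ℝ ℂ (0, Pi.single l 1)).comp H) z :=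
  ((ContinuousLinearMap.apply ℝ ℂ _).hasFDerivAt.comp z hf).add
    (((ContinuousLinearMap.apply ℝ ℂ _).hasFDerivAt.comp z hf).const_mul I)

lemma differentiableAt_dbar (hf : ContDiffAt ℝ 2 f z) (l : Fin n) :
    DifferentiableAt ℝ (dbar l f) z :=
  (hasFDerivAt_dbar ((hf.fderiv_right (m := 1) le_rfl).differentiableAt one_ne_zero).hasFDerivAt
    l).differentiableAt

lemma dbar_dbar_comm (hf : ContDiffAt ℝ 2 f z) (j k : Fin n) :
    dbar j (dbar k f) z = dbar k (dbar j f) z := by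
  have hH : HasFDerivAt (fderiv ℝ f) (fderiv ℝ (fderiv ℝ f) z) z :=
    ((hf.fderiv_right (m := 1) le_rfl).differentiableAt one_ne_zero).hasFDerivAt
  have hsymm := hf.isSymmSndFDerivAt (by simp)
  rw [dbar_eq_of_hasFDerivAt (hasFDerivAt_dbar hH k),
    dbar_eq_of_hasFDerivAt (hasFDerivAt_dbar hH j)]
  simp only [add_apply, smul_apply, ContinuousLinearMap.coe_comp, Function.comp_apply,
    ContinuousLinearMap.apply_apply, smul_eq_mul]
  rw [hsymm (Pi.single j 1, 0) (0, Pi.single k 1), hsymm (0, Pi.single j 1) (Pi.single k 1, 0),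
    hsymm (Pi.single j 1, 0) (Pi.single k 1, 0), hsymm (0, Pi.single j 1) (0, Pi.single k 1)]
  ring

lemma dbar_div (hf : DifferentiableAt ℝ f z) (hg : DifferentiableAt ℝ g z) (hgz : g z ≠ 0)
    (l : Fin n) :
    dbar l (fun y => f y / g y) z = (dbar l f z * g z - f z * dbar l g z) / g z ^ 2 := by
  rw [dbar_eq_of_hasFDerivAt (hasFDerivAt_div hf.hasFDerivAt hg.hasFDerivAt hgz), dbar, dbar]
  simp only [sub_apply, smul_apply, smul_eq_mul]
  field_simp
  ring

end dbar

section crField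

variable (ρ : (Fin n → ℝ) × (Fin n → ℝ) → ℂ) (N : Fin n)

noncomputable def crCoeff (l : Fin n) (z : (Fin n → ℝ) × (Fin n → ℝ)) : ℂ :=
  dbar l ρ z / dbar N ρ z

noncomputable def crField (l : Fin n) (f : (Fin n → ℝ) × (Fin n → ℝ) → ℂ)
    (z : (Fin n → ℝ) × (Fin n → ℝ)) : ℂ :=
  dbar l f z - crCoeff ρ N l z * dbar N f z

variable {ρ N} {z : (Fin n → ℝ) × (Fin n → ℝ)}

lemma differentiableAt_crCoeff (hρ : ContDiffAt ℝ 2 ρ z) (hN : dbar N ρ z ≠ 0) (l : Fin n) :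
    DifferentiableAt ℝ (crCoeff ρ N l) z :=
  (hasFDerivAt_div (differentiableAt_dbar hρ l).hasFDerivAt
    (differentiableAt_dbar hρ N).hasFDerivAt hN).differentiableAt

lemma crField_crCoeff_comm (hρ : ContDiffAt ℝ 2 ρ z) (hN : dbar N ρ z ≠ 0) (j k : Fin n) :
    crField ρ N j (crCoeff ρ N k) z = crField ρ N k (crCoeff ρ N j) z := by
  have hd := differentiableAt_dbar hρ
  unfold crField crCoeff
  rw [dbar_div (hd k) (hd N) hN j, dbar_div (hd k) (hd N) hN N, dbar_div (hd j) (hd N) hN k,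
    dbar_div (hd j) (hd N) hN N, dbar_dbar_comm hρ j k, dbar_dbar_comm hρ N k,
    dbar_dbar_comm hρ N j]
  field_simp
  ring

end crField

section Poisson

noncomputable def fiberCoord (l : Fin n) : (Fin n → ℝ) × (Fin n → ℝ) →L[ℝ] ℂ :=
  (ofRealCLM.comp (ContinuousLinearMap.proj l)).coprod
    (I • ofRealCLM.comp (ContinuousLinearMap.proj l))

lemma fiberCoord_apply (l : Fin n) (v : (Fin n → ℝ) × (Fin n → ℝ)) :
    fiberCoord l v = v.1 l + I * v.2 l := by
  simp [fiberCoord]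

lemma sum_fiberCoord_mul_fderiv (l : Fin n) (f : (Fin n → ℝ) × (Fin n → ℝ) → ℂ)
    (z : (Fin n → ℝ) × (Fin n → ℝ)) :
    ∑ m, (fiberCoord l (Pi.single m 1, 0) * fderiv ℝ f z (Pi.single m 1, 0)
      + fiberCoord l (0, Pi.single m 1) * fderiv ℝ f z (0, Pi.single m 1)) = dbar l f z := by
  simp [fiberCoord_apply, Pi.single_apply, apply_ite ((↑) : ℝ → ℂ), dbar,
    Finset.sum_add_distrib]

noncomputable def crSymbol (j N : Fin n) (a : (Fin n → ℝ) × (Fin n → ℝ) → ℂ) (w : Phase n) : ℂ :=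
  fiberCoord j w.2 - a w.1 * fiberCoord N w.2

noncomputable def poissonBracket (f g : Phase n → ℂ) (w : Phase n) : ℂ :=
  (∑ j : Fin n,
    (dd ((0, 0), (Pi.single j 1, 0)) f w * dd ((Pi.single j 1, 0), (0, 0)) g w
      - dd ((Pi.single j 1, 0), (0, 0)) f w * dd ((0, 0), (Pi.single j 1, 0)) g w))
  + ∑ j : Fin n,
    (dd ((0, 0), (0, Pi.single j 1)) f w * dd ((0, Pi.single j 1), (0, 0)) g w
      - dd ((0, Pi.single j 1), (0, 0)) f w * dd ((0, 0), (0, Pi.single j 1)) g w)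

variable {a b : (Fin n → ℝ) × (Fin n → ℝ) → ℂ} {w : Phase n}

lemma dd_crSymbol (ha : DifferentiableAt ℝ a w.1) (j N : Fin n) (v : Phase n) :
    dd v (crSymbol j N a) w
      = fiberCoord j v.2
        - (a w.1 * fiberCoord N v.2 + fiberCoord N w.2 * fderiv ℝ a w.1 v.1) := by
  have hζ (l : Fin n) := (fiberCoord l).hasFDerivAt.comp w (hasFDerivAt_snd (p := w))
  have h : HasFDerivAt (crSymbol j N a) _ w :=
    (hζ j).sub ((ha.hasFDerivAt.comp w hasFDerivAt_fst).mul (hζ N))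
  rw [dd, h.fderiv]
  simp

lemma poissonBracket_crSymbol (ha : DifferentiableAt ℝ a w.1) (hb : DifferentiableAt ℝ b w.1)
    (j k N : Fin n) :
    poissonBracket (crSymbol j N a) (crSymbol k N b) w = fiberCoord N w.2
      * ((dbar k a w.1 - b w.1 * dbar N a w.1) - (dbar j b w.1 - a w.1 * dbar N b w.1)) := by
  rw [poissonBracket, ← Finset.sum_add_distrib, ← sum_fiberCoord_mul_fderiv j b,
    ← sum_fiberCoord_mul_fderiv N b, ← sum_fiberCoord_mul_fderiv k a,
    ← sum_fiberCoord_mul_fderiv N a]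
  simp only [Finset.mul_sum, ← Finset.sum_sub_distrib]
  refine Finset.sum_congr rfl fun m _ => ?_
  simp only [dd_crSymbol ha, dd_crSymbol hb, Prod.mk_zero_zero, map_zero]
  ring

end Poisson

end CRSymbol

open CRSymbol

/-- **Poisson commutation of the symbol components of `∂̄_b`**: with
`q_j = ∂_{x_j}ρ + i ∂_{y_j}ρ`, `q_n ≠ 0` on `U`, and
`p_j = (ξ_j + iη_j) − (q_j/q_n)(ξ_n + iη_n)` on `U × ℝ^{2n}`, the Poisson bracket
`{p_j, p_k}` vanishes identically on `U × ℝ^{2n}` for all `1 ≤ j, k ≤ n−1`. -/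
theorem stmt_18 (n : ℕ) (hn : 2 ≤ n)
    (U : Set ((Fin n → ℝ) × (Fin n → ℝ))) (hU : IsOpen U)
    (ρ : (Fin n → ℝ) × (Fin n → ℝ) → ℂ) (hρ : ContDiffOn ℝ 2 ρ U)
    (q : Fin n → ((Fin n → ℝ) × (Fin n → ℝ)) → ℂ)
    (hq : ∀ j w, q j w = dd (Pi.single j 1, 0) ρ w + Complex.I * dd (0, Pi.single j 1) ρ w)
    (hqn : ∀ w ∈ U, q ⟨n - 1, by omega⟩ w ≠ 0)
    (p : Fin n → Phase n → ℂ)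
    (hp : ∀ j w, p j w = (w.2.1 j + Complex.I * w.2.2 j)
        - (q j w.1 / q ⟨n - 1, by omega⟩ w.1)
          * (w.2.1 ⟨n - 1, by omega⟩ + Complex.I * w.2.2 ⟨n - 1, by omega⟩))
    (pb : (Phase n → ℂ) → (Phase n → ℂ) → Phase n → ℂ)
    (hpb : ∀ (f g : Phase n → ℂ) (w : Phase n), pb f g w =
      (∑ j : Fin n,
        (dd ((0, 0), (Pi.single j 1, 0)) f w * dd ((Pi.single j 1, 0), (0, 0)) g w
          - dd ((Pi.single j 1, 0), (0, 0)) f w * dd ((0, 0), (Pi.single j 1, 0)) g w))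
      + ∑ j : Fin n,
        (dd ((0, 0), (0, Pi.single j 1)) f w * dd ((0, Pi.single j 1), (0, 0)) g w
          - dd ((0, Pi.single j 1), (0, 0)) f w * dd ((0, 0), (0, Pi.single j 1)) g w)) :
    ∀ j k : Fin n, (j : ℕ) < n - 1 → (k : ℕ) < n - 1 →
      ∀ w : Phase n, w.1 ∈ U → pb (p j) (p k) w = 0 := by
  intro j k _ _ w hw
  set N : Fin n := ⟨n - 1, by omega⟩
  obtain rfl : q = fun l => dbar l ρ := funext₂ hq
  obtain rfl : pb = poissonBracket := funext₃ hpb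
  obtain rfl : p = fun l => crSymbol l N (crCoeff ρ N l) :=
    funext₂ fun l w => by rw [hp, crSymbol, fiberCoord_apply, fiberCoord_apply, crCoeff]
  have hρw : ContDiffAt ℝ 2 ρ w.1 := hρ.contDiffAt (hU.mem_nhds hw)
  have hN : dbar N ρ w.1 ≠ 0 := hqn w.1 hw
  have hcomm := crField_crCoeff_comm hρw hN j k
  rw [crField, crField] at hcomm
  rw [poissonBracket_crSymbol (differentiableAt_crCoeff hρw hN j)
    (differentiableAt_crCoeff hρw hN k), hcomm, sub_self, mul_zero]
end
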